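/- arXiv:math/9503226 — 6 statements merged into one kernel-verified Lean document; each statement's English description precedes it below -/
import Mathlib

section
/- Let Ξ ⊆ Ξ' be sets of variables and Γ a set of abelian-group equations. If there is an increasing continuous sequence ⟨Ξ_ζ : ζ ≤ ζ*⟩ with Ξ_0 = Ξ, Ξ_{ζ*} = Ξ', such that for each ζ < ζ* the group G(Ξ_{ζ+1}, Γ) is a free extension of G(Ξ_ζ, Γ), then G(Ξ', Γ) is a free extension of G(Ξ, Γ): the canonical homomorphism G(Ξ,Γ) → G(Ξ',Γ) induced by the identity on Ξ is injective and its cokernel is a free abelian group. -/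
universe u

namespace Sh521

variable {V : Type u}

/-- The relations of `Γ` mentioning only variables from `Ξ`, viewed inside the free
abelian group `Ξ →₀ ℤ` on `Ξ`. -/
noncomputable def relSub (Γ : Set (V →₀ ℤ)) (Ξ : Set V) : AddSubgroup (↥Ξ →₀ ℤ) :=
  AddSubgroup.closure
    ((fun g => Finsupp.subtypeDomain (· ∈ Ξ) g) '' {g ∈ Γ | (g.support : Set V) ⊆ Ξ})

/-- `G(Ξ,Γ)`: the abelian group freely generated by `Ξ` except for the equations of `Γ`
mentioning only variables from `Ξ`. -/
abbrev GG (Γ : Set (V →₀ ℤ)) (Ξ : Set V) : Type u := (↥Ξ →₀ ℤ) ⧸ relSub Γ Ξ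

/-- The generator of `G(Ξ,Γ)` corresponding to a variable `v ∈ Ξ`. -/
noncomputable def gen (Γ : Set (V →₀ ℤ)) (Ξ : Set V) (v : V) (hv : v ∈ Ξ) : GG Γ Ξ :=
  QuotientAddGroup.mk (Finsupp.single ⟨v, hv⟩ (1 : ℤ))

/-- `G(Ξ',Γ)` is a free extension of `G(Ξ,Γ)`: the canonical homomorphism induced by the
identity on `Ξ` (i.e. sending generators to generators) is injective and its cokernel is
a free abelian group. -/
def FreeExtension (Γ : Set (V →₀ ℤ)) (Ξ Ξ' : Set V) : Prop :=
  Ξ ⊆ Ξ' ∧ ∃ φ : GG Γ Ξ →+ GG Γ Ξ',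
    (∀ (v : V) (hv : v ∈ Ξ) (hv' : v ∈ Ξ'), φ (gen Γ Ξ v hv) = gen Γ Ξ' v hv') ∧
    Function.Injective φ ∧ Module.Free ℤ (GG Γ Ξ' ⧸ φ.range)

end Sh521

/-!
The images `F ζ` of `G(Ξ_ζ,Γ)` in `G(Ξ',Γ)` form a continuous increasing chain of subgroups from
the image of `G(Ξ,Γ)` to everything. The maps `G(Ξ_ζ,Γ) → G(Ξ_ζ',Γ)` are injective by transfinite
induction: at successors compose injections; at a limit `δ` a relation of `G(Ξ_δ,Γ)` is a finite
combination of equations of `Γ`, each involving finitely many variables, so it already holds at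
an earlier stage. Hence `F (ζ+1) / F ζ ≅ G(Ξ_{ζ+1},Γ) / G(Ξ_ζ,Γ)` is free, and lifts of bases of
all these quotients form a basis of `G(Ξ',Γ) / F 0`: they span by induction along the chain, and
in a nontrivial relation modulo `F 0` the part of highest stage `μ` would be a relation modulo
`F μ`.
-/

universe v

open Submodule

section Filtration

variable {R : Type*} {M : Type v} [Ring R] [AddCommGroup M] [Module R M]

theorem Submodule.free_quotient_comap_of_injective {A : Type*} [AddCommGroup A] [Module R A]
    (f : A →ₗ[R] M) (hf : Function.Injective f) (K : Submodule R A) [Module.Free R (A ⧸ K)] :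
    Module.Free R (LinearMap.range f ⧸ (K.map f).comap (LinearMap.range f).subtype) := by
  refine Module.Free.of_equiv (Submodule.Quotient.equiv K _ (LinearEquiv.ofInjective f hf) ?_)
  ext ⟨_, a, rfl⟩
  rw [mem_map_equiv, mem_comap,
    show (⟨f a, _⟩ : LinearMap.range f) = LinearEquiv.ofInjective f hf a from rfl,
    LinearEquiv.symm_apply_apply]
  exact ⟨fun ha => mem_map_of_mem ha, fun ⟨a', ha', hfa'⟩ => hf hfa' ▸ ha'⟩

theorem Submodule.exists_lift_basis_of_free_quotient (N P : Submodule R M)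
    [Module.Free R (P ⧸ N.comap P.subtype)] :
    ∃ (ι : Type v) (q : ι → M), (∀ i, q i ∈ P) ∧ P ≤ N ⊔ span R (Set.range q) ∧
      LinearIndependent R (N.mkQ ∘ q) := by
  let b := Module.Free.chooseBasis R (P ⧸ N.comap P.subtype)
  choose l hl using fun i => Submodule.Quotient.mk_surjective _ (b i)
  refine ⟨_, P.subtype ∘ l, fun i => (l i).2, ?_, ?_⟩
  · have hsup : N.comap P.subtype ⊔ span R (Set.range l) = ⊤ := by
      rw [← map_mkQ_eq_top, map_span, ← Set.range_comp]
      exact (congrArg _ (congrArg Set.range (funext hl))).trans b.span_eq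
    calc P = map P.subtype (N.comap P.subtype ⊔ span R (Set.range l)) := by
          rw [hsup, map_subtype_top]
      _ = P ⊓ N ⊔ span R (Set.range (P.subtype ∘ l)) := by
          rw [map_sup, map_comap_subtype, map_span, Set.range_comp]
      _ ≤ N ⊔ span R (Set.range (P.subtype ∘ l)) := sup_le_sup_right inf_le_right _
  · let e := (N.comap P.subtype).mapQ N P.subtype le_rfl
    have he : LinearMap.ker e = ⊥ := by rw [ker_mapQ, mkQ_map_self]
    have hq : N.mkQ ∘ (P.subtype ∘ l) = e ∘ b := funext fun i => by simp [e, ← hl i]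
    rw [hq]
    exact b.linearIndependent.map' e he

section Stages

variable {lam : Ordinal} {F : Ordinal → Submodule R M} {ι : Set.Iio lam → Type*}
  {q : ∀ ζ, ι ζ → M}

theorem Submodule.le_sup_span_of_filtration
    (hcont : ∀ δ ≤ lam, Order.IsSuccLimit δ → F δ ≤ ⨆ ζ ∈ Set.Iio δ, F ζ)
    (hspan : ∀ ζ : Set.Iio lam, F (ζ + 1) ≤ F ζ ⊔ span R (Set.range (q ζ))) :
    ∀ ζ ≤ lam, F ζ ≤ F 0 ⊔ span R (Set.range fun i : Σ ζ, ι ζ => q i.1 i.2) := by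
  intro ζ
  induction ζ using WellFoundedLT.induction with
  | ind ζ IH =>
    intro hζ
    rcases Ordinal.zero_or_succ_or_isSuccLimit ζ with rfl | ⟨ξ, rfl⟩ | hlim
    · exact le_sup_left
    · have hξ : ξ < lam := (Order.lt_succ ξ).trans_le hζ
      rw [Order.succ_eq_add_one]
      refine (hspan ⟨ξ, hξ⟩).trans (sup_le (IH ξ (Order.lt_succ ξ) hξ.le) ?_)
      exact le_sup_of_le_right (span_mono fun _ ⟨i, hi⟩ => ⟨⟨⟨ξ, hξ⟩, i⟩, hi⟩)
    · exact (hcont ζ hζ hlim).trans (iSup₂_le fun ξ hξ => IH ξ hξ (lt_of_lt_of_le hξ hζ).le)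

theorem Submodule.linearIndependent_mkQ_of_filtration
    (hmono : ∀ ζ ζ', ζ ≤ ζ' → ζ' ≤ lam → F ζ ≤ F ζ')
    (hmem : ∀ (ζ : Set.Iio lam) i, q ζ i ∈ F (ζ + 1))
    (hind : ∀ ζ : Set.Iio lam, LinearIndependent R ((F ζ).mkQ ∘ q ζ)) :
    LinearIndependent R ((F 0).mkQ ∘ fun i : Σ ζ, ι ζ => q i.1 i.2) := by
  rw [linearIndependent_iff]
  intro c hc
  by_contra hc0
  have hne : c.splitSupport.Nonempty := by
    obtain ⟨⟨ζ, i⟩, hi⟩ := Finsupp.support_nonempty_iff.2 hc0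
    refine ⟨ζ, (Finsupp.mem_splitSupport_iff_nonzero c ζ).2 fun h => ?_⟩
    exact Finsupp.mem_support_iff.1 hi (by rw [← Finsupp.split_apply, h, Finsupp.zero_apply])
  -- Modulo `F μ`, for the highest stage `μ` occurring in `c`, only the stage-`μ` part survives.
  set μ := c.splitSupport.max' hne
  have hμ : μ ∈ c.splitSupport := c.splitSupport.max'_mem hne
  have hlow : ∀ ζ ∈ c.splitSupport.erase μ,
      Finsupp.linearCombination R (q ζ) (c.split ζ) ∈ F μ := by
    intro ζ hζ
    have hζμ : ζ < μ := lt_of_le_of_ne (c.splitSupport.le_max' ζ (Finset.mem_of_mem_erase hζ))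
      (Finset.ne_of_mem_erase hζ)
    refine hmono _ _ (Order.add_one_le_of_lt hζμ) μ.2.le ?_
    exact span_le.2 (Set.range_subset_iff.2 (hmem ζ))
      ((Finsupp.range_linearCombination R).le (LinearMap.mem_range_self _ _))
  have htotal : Finsupp.linearCombination R (fun i : Σ ζ, ι ζ => q i.1 i.2) c ∈ F μ := by
    refine hmono 0 μ zero_le μ.2.le ?_
    rwa [← Finsupp.apply_linearCombination, mkQ_apply, Quotient.mk_eq_zero] at hc
  have htop : Finsupp.linearCombination R (q μ) (c.split μ) ∈ F μ := by
    rw [Finsupp.linearCombination_apply, Finsupp.sigma_sum, ← Finset.add_sum_erase _ _ hμ]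
      at htotal
    simpa [Finsupp.linearCombination_apply] using sub_mem htotal (sum_mem hlow)
  refine (Finsupp.mem_splitSupport_iff_nonzero c μ).1 hμ (linearIndependent_iff.1 (hind μ) _ ?_)
  rwa [← Finsupp.apply_linearCombination, mkQ_apply, Quotient.mk_eq_zero]

end Stages

theorem Module.free_quotient_of_filtration (lam : Ordinal) (F : Ordinal → Submodule R M)
    (hmono : ∀ ζ ζ', ζ ≤ ζ' → ζ' ≤ lam → F ζ ≤ F ζ')
    (hcont : ∀ δ ≤ lam, Order.IsSuccLimit δ → F δ ≤ ⨆ ζ ∈ Set.Iio δ, F ζ) (htop : F lam = ⊤)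
    (hfree : ∀ ζ < lam, Module.Free R (F (ζ + 1) ⧸ (F ζ).comap (F (ζ + 1)).subtype)) :
    Module.Free R (M ⧸ F 0) := by
  choose ι q hmem hspan hind using fun ζ : Set.Iio lam =>
    have := hfree ζ ζ.2
    exists_lift_basis_of_free_quotient (F ζ) (F (ζ + 1))
  have hsup := le_sup_span_of_filtration hcont hspan lam le_rfl
  rw [htop, top_le_iff, ← map_mkQ_eq_top, map_span, ← Set.range_comp] at hsup
  exact Module.Free.of_basis
    (Module.Basis.mk (linearIndependent_mkQ_of_filtration hmono hmem hind) hsup.ge)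

end Filtration

namespace Sh521

variable {V : Type u} {Γ : Set (V →₀ ℤ)}

section incl

variable {Θ Ξ Ξ' : Set V}

noncomputable def freeIncl (h : Θ ⊆ Ξ) : (↥Θ →₀ ℤ) →+ (↥Ξ →₀ ℤ) :=
  Finsupp.mapDomain.addMonoidHom (Set.inclusion h)

theorem freeIncl_injective (h : Θ ⊆ Ξ) : Function.Injective (freeIncl h) :=
  Finsupp.mapDomain_injective (Set.inclusion_injective h)

theorem freeIncl_single (h : Θ ⊆ Ξ) (v : Θ) (n : ℤ) :
    freeIncl h (Finsupp.single v n) = Finsupp.single (Set.inclusion h v) n :=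
  Finsupp.mapDomain_single

theorem freeIncl_freeIncl (h : Θ ⊆ Ξ) (h' : Ξ ⊆ Ξ') (f : ↥Θ →₀ ℤ) :
    freeIncl h' (freeIncl h f) = freeIncl (h.trans h') f :=
  (Finsupp.mapDomain_comp ..).symm

theorem freeIncl_subtypeDomain (h : Θ ⊆ Ξ) {g : V →₀ ℤ} (hg : ↑g.support ⊆ Θ) :
    freeIncl h (g.subtypeDomain (· ∈ Θ)) = g.subtypeDomain (· ∈ Ξ) := by
  ext ⟨v, hv⟩
  by_cases hvΘ : v ∈ Θ
  · exact Finsupp.mapDomain_apply (Set.inclusion_injective h) _ ⟨v, hvΘ⟩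
  · have hgv : g v = 0 := Finsupp.notMem_support_iff.1 fun hv' => hvΘ (hg hv')
    have hrange : (⟨v, hv⟩ : ↥Ξ) ∉ Set.range (Set.inclusion h) := fun ⟨w, hw⟩ =>
      hvΘ (by rw [← show (w : V) = v from congrArg Subtype.val hw]; exact w.2)
    simp [freeIncl, Finsupp.mapDomain_of_notMem_range _ _ hrange, hgv]

theorem relSub_map_le (h : Θ ⊆ Ξ) : (relSub Γ Θ).map (freeIncl h) ≤ relSub Γ Ξ := by
  rw [relSub, AddMonoidHom.map_closure]
  apply AddSubgroup.closure_mono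
  rintro _ ⟨_, ⟨g, ⟨hgΓ, hg⟩, rfl⟩, rfl⟩
  exact ⟨g, ⟨hgΓ, hg.trans h⟩, (freeIncl_subtypeDomain h hg).symm⟩

noncomputable def incl (Γ : Set (V →₀ ℤ)) (h : Θ ⊆ Ξ) : GG Γ Θ →+ GG Γ Ξ :=
  QuotientAddGroup.map _ _ (freeIncl h) fun _ hx =>
    relSub_map_le h (AddSubgroup.mem_map_of_mem _ hx)

theorem incl_mk (h : Θ ⊆ Ξ) (f : ↥Θ →₀ ℤ) :
    incl Γ h (QuotientAddGroup.mk f) = QuotientAddGroup.mk (freeIncl h f) := rfl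

theorem incl_gen (h : Θ ⊆ Ξ) (v : V) (hv : v ∈ Θ) :
    incl Γ h (gen Γ Θ v hv) = gen Γ Ξ v (h hv) := by
  rw [gen, incl_mk, freeIncl_single]
  rfl

theorem incl_incl (h : Θ ⊆ Ξ) (h' : Ξ ⊆ Ξ') (x : GG Γ Θ) :
    incl Γ h' (incl Γ h x) = incl Γ (h.trans h') x := by
  induction x using QuotientAddGroup.induction_on with
  | H f => rw [incl_mk, incl_mk, incl_mk, freeIncl_freeIncl]

-- The image of `G(Θ,Γ)` in `G(Ξ,Γ)` (`range_incl`), in a form that makes sense for every `Θ`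
-- and visibly commutes with unions.
noncomputable def genSpan (Γ : Set (V →₀ ℤ)) (Ξ Θ : Set V) : Submodule ℤ (GG Γ Ξ) :=
  Submodule.span ℤ ((fun v : Ξ => gen Γ Ξ v v.2) '' (Subtype.val ⁻¹' Θ))

theorem genSpan_self : genSpan Γ Ξ Ξ = ⊤ := by
  refine Submodule.eq_top_iff'.2 fun x => ?_
  induction x using QuotientAddGroup.induction_on with
  | H f =>
    induction f using Finsupp.induction_linear with
    | zero => exact zero_mem _
    | add f g hf hg => exact add_mem hf hg
    | single v n =>
      rw [← mul_one n, ← smul_eq_mul, ← Finsupp.smul_single, QuotientAddGroup.mk_zsmul]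
      exact Submodule.smul_mem _ n (subset_span ⟨v, v.2, rfl⟩)

theorem range_incl (h : Θ ⊆ Ξ) : (incl Γ h).range.toIntSubmodule = genSpan Γ Ξ Θ := by
  rw [← AddMonoidHom.coe_toIntLinearMap_range, LinearMap.range_eq_map, ← genSpan_self, genSpan,
    Submodule.map_span, ← Set.image_comp, genSpan]
  congr 1
  ext x
  constructor
  · rintro ⟨v, -, rfl⟩
    exact ⟨Set.inclusion h v, v.2, (incl_gen h v v.2).symm⟩
  · rintro ⟨w, hw, rfl⟩
    exact ⟨⟨w, hw⟩, hw, incl_gen h w hw⟩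

theorem genSpan_mono {Θ' : Set V} (h : Θ ⊆ Θ') : genSpan Γ Ξ Θ ≤ genSpan Γ Ξ Θ' :=
  Submodule.span_mono (Set.image_mono (Set.preimage_mono h))

theorem map_range_incl (h : Θ ⊆ Ξ) (h' : Ξ ⊆ Ξ') :
    (incl Γ h).range.toIntSubmodule.map (incl Γ h').toIntLinearMap = genSpan Γ Ξ' Θ := by
  rw [← AddMonoidHom.coe_toIntLinearMap_range, ← LinearMap.range_comp,
    show (incl Γ h').toIntLinearMap ∘ₗ (incl Γ h).toIntLinearMap =
      (incl Γ (h.trans h')).toIntLinearMap from LinearMap.ext (incl_incl h h'),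
    AddMonoidHom.coe_toIntLinearMap_range, range_incl]

theorem genSpan_biUnion {ι : Type*} (s : Set ι) (Θ : ι → Set V) :
    genSpan Γ Ξ (⋃ i ∈ s, Θ i) = ⨆ i ∈ s, genSpan Γ Ξ (Θ i) := by
  simp only [genSpan, Set.preimage_iUnion₂, Set.image_iUnion₂, Submodule.span_iUnion₂]

theorem hom_ext {A : Type*} [AddCommGroup A] {φ ψ : GG Γ Ξ →+ A}
    (h : ∀ v hv, φ (gen Γ Ξ v hv) = ψ (gen Γ Ξ v hv)) : φ = ψ :=
  AddMonoidHom.toIntLinearMap_injective (LinearMap.ext_on genSpan_self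
    (by rintro _ ⟨v, -, rfl⟩; exact h v v.2))

theorem incl_self (h : Ξ ⊆ Ξ) : incl Γ h = AddMonoidHom.id _ :=
  hom_ext fun v hv => incl_gen h v hv

theorem eq_incl (h : Θ ⊆ Ξ) {φ : GG Γ Θ →+ GG Γ Ξ}
    (hφ : ∀ v (hv : v ∈ Θ) (hv' : v ∈ Ξ), φ (gen Γ Θ v hv) = gen Γ Ξ v hv') : φ = incl Γ h :=
  hom_ext fun v hv => by rw [hφ v hv (h hv), incl_gen]

theorem freeExtension_iff : FreeExtension Γ Θ Ξ ↔ ∃ h : Θ ⊆ Ξ,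
    Function.Injective (incl Γ h) ∧ Module.Free ℤ (GG Γ Ξ ⧸ (incl Γ h).range) := by
  constructor
  · rintro ⟨h, φ, hφ, hinj, hfree⟩
    obtain rfl := eq_incl h hφ
    exact ⟨h, hinj, hfree⟩
  · rintro ⟨h, hinj, hfree⟩
    exact ⟨h, incl Γ h, fun v hv _ => incl_gen h v hv, hinj, hfree⟩

end incl

section directed

variable {ι : Type*} [Preorder ι] [IsDirected ι (· ≤ ·)] [Nonempty ι] {S : ι → Set V}
  {Ξ : Set V}

theorem relSub_le_iSup_map (hS : Monotone S) (hSΞ : ∀ i, S i ⊆ Ξ) (hΞ : Ξ ⊆ ⋃ i, S i) :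
    relSub Γ Ξ ≤ ⨆ i, (relSub Γ (S i)).map (freeIncl (hSΞ i)) := by
  rw [relSub, AddSubgroup.closure_le]
  rintro _ ⟨g, ⟨hgΓ, hg⟩, rfl⟩
  obtain ⟨i, hi⟩ := hS.directed_le.exists_mem_subset_of_finset_subset_biUnion (hg.trans hΞ)
  exact AddSubgroup.mem_iSup_of_mem i
    ⟨_, AddSubgroup.subset_closure ⟨g, ⟨hgΓ, hi⟩, rfl⟩, freeIncl_subtypeDomain _ hi⟩

theorem exists_incl_eq_zero_of_directed (hS : Monotone S) (hSΞ : ∀ i, S i ⊆ Ξ)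
    (hΞ : Ξ ⊆ ⋃ i, S i) {i₀ : ι} {x : GG Γ (S i₀)} (hx : incl Γ (hSΞ i₀) x = 0) :
    ∃ i, ∃ hi : i₀ ≤ i, incl Γ (hS hi) x = 0 := by
  obtain ⟨f, rfl⟩ := QuotientAddGroup.mk_surjective x
  have hdir : Monotone fun i => (relSub Γ (S i)).map (freeIncl (hSΞ i)) := by
    intro i j hij
    dsimp only
    rw [show freeIncl (hSΞ i) = (freeIncl (hSΞ j)).comp (freeIncl (hS hij)) from
      AddMonoidHom.ext fun f => (freeIncl_freeIncl _ _ f).symm, ← AddSubgroup.map_map]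
    exact AddSubgroup.map_mono (relSub_map_le _)
  obtain ⟨i₁, r, hr, hrf⟩ := (AddSubgroup.mem_iSup_of_directed hdir.directed_le).1
    (relSub_le_iSup_map hS hSΞ hΞ ((QuotientAddGroup.eq_zero_iff _).1 hx))
  obtain ⟨i, hi₀, hi₁⟩ := directed_of (· ≤ ·) i₀ i₁
  have hfr : freeIncl (hS hi₁) r = freeIncl (hS hi₀) f := freeIncl_injective (hSΞ i)
    (by rw [freeIncl_freeIncl, freeIncl_freeIncl]; exact hrf)
  refine ⟨i, hi₀, ?_⟩
  rw [incl_mk, QuotientAddGroup.eq_zero_iff, ← hfr]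
  exact relSub_map_le _ (AddSubgroup.mem_map_of_mem _ hr)

end directed

theorem injective_incl_of_filtration (ζstar : Ordinal) (Ξseq : Ordinal → Set V)
    (hmono : ∀ ζ ζ' : Ordinal, ζ ≤ ζ' → ζ' ≤ ζstar → Ξseq ζ ⊆ Ξseq ζ')
    (hcont : ∀ δ ≤ ζstar, Order.IsSuccLimit δ → Ξseq δ = ⋃ ζ ∈ Set.Iio δ, Ξseq ζ)
    (hstep : ∀ ζ < ζstar, ∀ h : Ξseq ζ ⊆ Ξseq (ζ + 1), Function.Injective (incl Γ h)) :
    ∀ ζ' ≤ ζstar, ∀ ζ ≤ ζ', ∀ h : Ξseq ζ ⊆ Ξseq ζ', Function.Injective (incl Γ h) := by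
  intro ζ'
  induction ζ' using WellFoundedLT.induction with
  | ind ζ' IH =>
  intro hζ' ζ hζ h
  rcases hζ.eq_or_lt with rfl | hlt
  · rw [incl_self]
    exact Function.injective_id
  rcases Ordinal.zero_or_succ_or_isSuccLimit ζ' with rfl | ⟨ξ, hξ⟩ | hlim
  · exact absurd hlt not_lt_zero
  · rw [Order.succ_eq_add_one] at hξ
    subst hξ
    have hξ : ξ < ζstar := (lt_add_one ξ).trans_le hζ'
    have hζξ : ζ ≤ ξ := Order.lt_add_one_iff.1 hlt
    have h₁ : Ξseq ζ ⊆ Ξseq ξ := hmono _ _ hζξ hξ.le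
    have h₂ : Ξseq ξ ⊆ Ξseq (ξ + 1) := hmono _ _ (lt_add_one ξ).le hζ'
    rw [show ⇑(incl Γ h) = incl Γ h₂ ∘ incl Γ h₁ from funext fun x => (incl_incl h₁ h₂ x).symm]
    exact (hstep ξ hξ h₂).comp (IH ξ (lt_add_one ξ) hξ.le ζ hζξ h₁)
  · have : Nonempty (Set.Iio ζ') := ⟨⟨ζ, hlt⟩⟩
    have hS : Monotone fun ξ : Set.Iio ζ' => Ξseq ξ := fun _ b hab =>
      hmono _ _ hab (b.2.le.trans hζ')
    have hcov : Ξseq ζ' ⊆ ⋃ ξ : Set.Iio ζ', Ξseq ξ := by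
      rw [hcont ζ' hζ' hlim, Set.biUnion_eq_iUnion]
    rw [injective_iff_map_eq_zero]
    intro x hx
    obtain ⟨ξ, hζξ, hξ⟩ := exists_incl_eq_zero_of_directed (i₀ := ⟨ζ, hlt⟩) hS
      (fun ξ => hmono _ _ ξ.2.le hζ') hcov hx
    exact (injective_iff_map_eq_zero _).1 (IH ξ ξ.2 (ξ.2.le.trans hζ') ζ hζξ _) x hξ

/-- Observation 0.2(1). If there is an increasing continuous sequence
`⟨Ξ_ζ : ζ ≤ ζ*⟩` with `Ξ_0 = Ξ`, `Ξ_{ζ*} = Ξ'`, such that each `G(Ξ_{ζ+1},Γ)` is a free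
extension of `G(Ξ_ζ,Γ)`, then `G(Ξ',Γ)` is a free extension of `G(Ξ,Γ)`. -/
theorem freeExtension_of_filtration {V : Type u} (Γ : Set (V →₀ ℤ)) (Ξ Ξ' : Set V)
    (hsub : Ξ ⊆ Ξ') (ζstar : Ordinal) (Ξseq : Ordinal → Set V)
    (h0 : Ξseq 0 = Ξ) (hend : Ξseq ζstar = Ξ')
    (hmono : ∀ ζ ζ' : Ordinal, ζ ≤ ζ' → ζ' ≤ ζstar → Ξseq ζ ⊆ Ξseq ζ')
    (hcont : ∀ δ ≤ ζstar, Order.IsSuccLimit δ → Ξseq δ = ⋃ ζ ∈ Set.Iio δ, Ξseq ζ)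
    (hstep : ∀ ζ < ζstar, FreeExtension Γ (Ξseq ζ) (Ξseq (ζ + 1))) :
    FreeExtension Γ Ξ Ξ' := by
  subst h0 hend
  have hinj := injective_incl_of_filtration ζstar Ξseq hmono hcont fun ζ hζ h => by
    obtain ⟨_, hinj, -⟩ := freeExtension_iff.1 (hstep ζ hζ)
    exact hinj
  refine freeExtension_iff.2 ⟨hsub, hinj ζstar le_rfl 0 zero_le hsub, ?_⟩
  change Module.Free ℤ (_ ⧸ (incl Γ hsub).range.toIntSubmodule)
  rw [range_incl]
  refine Module.free_quotient_of_filtration ζstar (fun ζ => genSpan Γ (Ξseq ζstar) (Ξseq ζ))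
    (fun ζ ζ' hζ hζ' => genSpan_mono (hmono ζ ζ' hζ hζ'))
    (fun δ hδ hlim => by rw [hcont δ hδ hlim, genSpan_biUnion]) genSpan_self fun ζ hζ => ?_
  obtain ⟨h, -, hfree⟩ := freeExtension_iff.1 (hstep ζ hζ)
  have : Module.Free ℤ (_ ⧸ (incl Γ h).range.toIntSubmodule) := hfree
  have hζ' := Order.add_one_le_of_lt hζ
  have := Submodule.free_quotient_comap_of_injective
    (incl Γ (hmono _ _ hζ' le_rfl)).toIntLinearMap (hinj _ le_rfl _ hζ' _)
    (incl Γ h).range.toIntSubmodule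
  rwa [map_range_incl, AddMonoidHom.coe_toIntLinearMap_range, range_incl] at this

end Sh521
end

section
/- Let S be a λ-set, κ a regular cardinal with λ(η,S) > κ for every η ∈ S_i, and G : S_f → κ a function. Then there is a sub-λ-set S¹ ≤ S such that G is constant on S¹_f. -/
open Set

namespace Sh521

/-- Finite sequences of ordinals. -/
abbrev Seq := List Ordinal

/-- `W(η,S) = { i : η⌢⟨i⟩ ∈ S }`. -/
def Wset (S : Set Seq) (η : Seq) : Set Ordinal := {i | η ++ [i] ∈ S}

/-- `λ(η,S) = sup W(η,S)`. -/
noncomputable def lamOf (S : Set Seq) (η : Seq) : Ordinal := sSup (Wset S η)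

/-- An ordinal which is a regular uncountable cardinal. -/
def IsRegUncountable (o : Ordinal) : Prop :=
  ∃ κ : Cardinal, κ.IsRegular ∧ Cardinal.aleph0 < κ ∧ o = κ.ord

/-- `C` is unbounded below `κ`. -/
def UnboundedBelow (C : Set Ordinal) (κ : Ordinal) : Prop :=
  ∀ α < κ, ∃ β ∈ C, α ≤ β ∧ β < κ

/-- `C` is closed below `κ`: any limit ordinal `< κ` which is approached by members
of `C` belongs to `C`. -/
def ClosedBelow (C : Set Ordinal) (κ : Ordinal) : Prop :=
  ∀ δ < κ, Order.IsSuccLimit δ → (∀ β < δ, ∃ γ ∈ C, β ≤ γ ∧ γ < δ) → δ ∈ C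

/-- `C` is a stationary subset of `κ`: it meets every club of `κ`. -/
def StationaryBelow (C : Set Ordinal) (κ : Ordinal) : Prop :=
  ∀ D : Set Ordinal, ClosedBelow D κ → UnboundedBelow D κ → (C ∩ D).Nonempty

/-- Definition 3.1: `S` is a `λ`-set: a nonempty set of strictly decreasing finite
sequences of ordinals `< λ`, closed under initial segments, such that whenever
`W(η,S) ≠ ∅`, `λ(η,S)` is a regular uncountable cardinal and `W(η,S)` is stationary
in it; and `λ(⟨⟩,S) = λ`. -/
def IsLambdaSet (lam : Ordinal) (S : Set Seq) : Prop :=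
  S.Nonempty ∧
  (∀ η ∈ S, List.Chain' (fun a b => a > b) η) ∧
  (∀ η ∈ S, ∀ i ∈ η, i < lam) ∧
  (∀ η ∈ S, ∀ ν : Seq, ν <+: η → ν ∈ S) ∧
  (∀ η ∈ S, (Wset S η).Nonempty →
    IsRegUncountable (lamOf S η) ∧ StationaryBelow (Wset S η) (lamOf S η)) ∧
  lamOf S [] = lam

/-- The final elements of `S`. -/
def Sf (S : Set Seq) : Set Seq := {η | η ∈ S ∧ Wset S η = ∅}

/-- The initial elements of `S`. -/
def Si (S : Set Seq) : Set Seq := S \ Sf S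

/-- `S¹ ≤ S²` : `S¹` is a sub-`λ`-set of `S²`. -/
def SubLambdaSet (S1 S2 : Set Seq) : Prop :=
  S1 ⊆ S2 ∧ ∀ η ∈ S1, lamOf S1 η = lamOf S2 η

end Sh521

/-!
Label the nodes of `S` by recursion along the tree, each node after its successors (there are no
infinite branches, as the sequences decrease): a final node `η` gets `G η`, an inner node a value
`c < κ` such that the successors labelled `c` form a stationary subset of `λ(η,S)`. Such a `c`
exists because `λ(η,S)` is regular and larger than `κ`, and a stationary subset of a regular
uncountable cardinal split into fewer pieces has a stationary piece. The nodes all of whose initial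
segments carry the root's label form `S¹`: each of its successor sets is stationary, hence cofinal
in `λ(η,S)`, so `λ(η,S¹) = λ(η,S)`; and its final nodes are final in `S`, where the label is `G`.
-/

namespace Sh521

open Cardinal Order Set

section Stationary

variable {C D : Set Ordinal} {θ : Ordinal}

theorem StationaryBelow.nonempty (h : StationaryBelow C θ) : C.Nonempty :=
  (h univ (fun _ _ _ _ ↦ trivial) fun α hα ↦ ⟨α, trivial, le_rfl, hα⟩).mono inter_subset_left

theorem StationaryBelow.unboundedBelow (h : StationaryBelow C θ) : UnboundedBelow C θ := by
  intro α hα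
  have hclosed : ClosedBelow (Ico α θ) θ := fun δ hδ hlim happ ↦ by
    obtain ⟨γ, hγ, -, hγδ⟩ := happ 0 (Ordinal.isSuccLimit_iff.1 hlim).1.bot_lt
    exact ⟨hγ.1.trans hγδ.le, hδ⟩
  have hunbdd : UnboundedBelow (Ico α θ) θ := fun β hβ ↦
    ⟨max α β, ⟨le_max_left _ _, max_lt hα hβ⟩, le_max_right _ _, max_lt hα hβ⟩
  exact h _ hclosed hunbdd

theorem UnboundedBelow.le_csSup (h : UnboundedBelow C θ) (hθ : IsSuccLimit θ) (hC : BddAbove C) :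
    θ ≤ sSup C := by
  refine le_of_forall_lt fun α hα ↦ ?_
  obtain ⟨β, hβC, hαβ, -⟩ := h _ (hθ.succ_lt hα)
  exact (lt_succ α).trans_le (hαβ.trans (_root_.le_csSup hC hβC))

theorem StationaryBelow.csSup_eq (hCD : C ⊆ D) (hD : BddAbove D)
    (hlim : IsSuccLimit (sSup D)) (hC : StationaryBelow C (sSup D)) : sSup C = sSup D :=
  le_antisymm (csSup_le_csSup hD hC.nonempty hCD)
    (hC.unboundedBelow.le_csSup hlim (hD.mono hCD))

theorem isClub_preimage_val (hcl : ClosedBelow D θ) (hub : UnboundedBelow D θ) :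
    IsClub (Subtype.val ⁻¹' D : Set (Iio θ)) := by
  refine ⟨fun d hdD hne _ a hlub ↦ ?_, fun a ↦ ?_⟩
  · by_cases ha : a ∈ d
    · exact hdD ha
    have happ : ∀ β < a.1, ∃ γ ∈ d, β < γ.1 ∧ γ < a := fun β hβ ↦
      hlub.exists_between' ha (b := ⟨β, hβ.trans a.2⟩) hβ
    obtain ⟨x, hx⟩ := hne
    have hxa : x < a := lt_of_le_of_ne (hlub.1 hx) (ne_of_mem_of_not_mem hx ha)
    have ha0 : a.1 ≠ 0 := (zero_le.trans_lt (show x.1 < a.1 from hxa)).ne'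
    refine hcl a.1 a.2 (Ordinal.isSuccLimit_iff.2 ⟨ha0, isSuccPrelimit_of_succ_lt fun β hβ ↦ ?_⟩)
      fun β hβ ↦ ?_
    · obtain ⟨γ, -, hβγ, hγa⟩ := happ β hβ
      exact (succ_le_of_lt hβγ).trans_lt hγa
    · obtain ⟨γ, hγd, hβγ, hγa⟩ := happ β hβ
      exact ⟨γ.1, hdD hγd, hβγ.le, hγa⟩
  · obtain ⟨β, hβD, hαβ, hβθ⟩ := hub a.1 a.2
    exact ⟨⟨β, hβθ⟩, hβD, hαβ⟩

theorem closedBelow_image_val {t : Set (Iio θ)} (ht : IsClub t) :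
    ClosedBelow (Subtype.val '' t) θ := by
  intro δ hδ hlim happ
  refine ⟨⟨δ, hδ⟩, ht.isLUB_mem (t := {x ∈ t | x.1 < δ}) (sep_subset _ _) ?_ ⟨?_, ?_⟩, rfl⟩
  · obtain ⟨-, ⟨x, hx, rfl⟩, -, hxδ⟩ := happ 0 (Ordinal.isSuccLimit_iff.1 hlim).1.bot_lt
    exact ⟨x, hx, hxδ⟩
  · exact fun x hx ↦ hx.2.le
  · intro b hb
    by_contra! hbδ
    obtain ⟨-, ⟨x, hx, rfl⟩, hbx, hxδ⟩ := happ _ (hlim.succ_lt (show b.1 < δ from hbδ))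
    exact (lt_succ b.1).not_ge (hbx.trans (hb ⟨hx, hxδ⟩))

theorem unboundedBelow_image_val {t : Set (Iio θ)} (ht : IsClub t) :
    UnboundedBelow (Subtype.val '' t) θ := fun α hα ↦ by
  obtain ⟨b, hbt, hαb⟩ := ht.isCofinal ⟨α, hα⟩
  exact ⟨b.1, ⟨b, hbt, rfl⟩, hαb, b.2⟩

theorem stationaryBelow_iff_isStationary :
    StationaryBelow C θ ↔ IsStationary (Subtype.val ⁻¹' C : Set (Iio θ)) := by
  constructor
  · intro h t ht
    obtain ⟨-, hC, x, hxt, rfl⟩ := h _ (closedBelow_image_val ht) (unboundedBelow_image_val ht)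
    exact ⟨x, hC, hxt⟩
  · intro h D hcl hub
    obtain ⟨x, hxC, hxD⟩ := h (isClub_preimage_val hcl hub)
    exact ⟨x.1, hxC, hxD⟩

theorem StationaryBelow.exists_stationaryBelow_fiber {κ : Ordinal} (hθ : θ.cof ≠ ℵ₀)
    (hκ : κ.card < θ.cof) (hC : StationaryBelow C θ) {f : Ordinal → Ordinal}
    (hf : MapsTo f C (Iio κ)) : ∃ c < κ, StationaryBelow {i ∈ C | f i = c} θ := by
  have hcover : Subtype.val ⁻¹' C =
      ⋃ c : Iio κ, (Subtype.val ⁻¹' {i ∈ C | f i = c} : Set (Iio θ)) := by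
    ext x
    simp only [mem_preimage, mem_iUnion, mem_ofPred_eq]
    exact ⟨fun hx ↦ ⟨⟨f x, hf hx⟩, hx, rfl⟩, fun ⟨_, hx, _⟩ ↦ hx⟩
  rw [stationaryBelow_iff_isStationary, hcover,
    isStationary_iUnion_iff (by simpa [← Ordinal.lift_cof] using hθ)
      (by simpa [← Ordinal.lift_cof, ← Ordinal.lift_card] using hκ)] at hC
  obtain ⟨⟨c, hc⟩, hstat⟩ := hC
  exact ⟨c, hc, stationaryBelow_iff_isStationary.2 hstat⟩

end Stationary

theorem IsRegUncountable.cof_ne_aleph0 {θ : Ordinal} (h : IsRegUncountable θ) : θ.cof ≠ ℵ₀ := by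
  obtain ⟨c, hc, hc0, rfl⟩ := h
  rw [hc.cof_ord]
  exact hc0.ne'

theorem IsRegUncountable.card_lt_cof {θ κ : Ordinal} (h : IsRegUncountable θ) (hκ : κ < θ) :
    κ.card < θ.cof := by
  obtain ⟨c, hc, -, rfl⟩ := h
  rw [hc.cof_ord]
  exact lt_ord.1 hκ

theorem IsRegUncountable.isSuccLimit {θ : Ordinal} (h : IsRegUncountable θ) : IsSuccLimit θ := by
  obtain ⟨c, hc, -, rfl⟩ := h
  exact Cardinal.isSuccLimit_ord hc.aleph0_le

section LambdaSet

variable {lam : Ordinal} {S : Set Seq}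

theorem IsLambdaSet.nil_mem (hS : IsLambdaSet lam S) : [] ∈ S :=
  hS.1.elim fun η hη ↦ hS.2.2.2.1 η hη [] η.nil_prefix

theorem IsLambdaSet.bddAbove_wset (hS : IsLambdaSet lam S) (η : Seq) : BddAbove (Wset S η) :=
  ⟨lam, fun i hi ↦ (hS.2.2.1 _ hi i (by simp)).le⟩

theorem IsLambdaSet.lt_getLastD (hS : IsLambdaSet lam S) {η : Seq} {i : Ordinal}
    (hi : i ∈ Wset S η) : i < η.getLastD lam := by
  induction η using List.reverseRecOn with
  | nil => exact hS.2.2.1 _ hi i (by simp)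
  | append_singleton ν a _ =>
    have hchain := List.isChain_append.1 (hS.2.1 _ hi)
    simpa using hchain.2.2 a (by simp) i (by simp)

end LambdaSet

section Label

open scoped Classical in
/-- The first conjunct of the guard holds on every λ-set (`IsLambdaSet.lt_getLastD`); it only
makes the recursion on the last entry well-founded. -/
noncomputable def label (lam : Ordinal) (S : Set Seq) (κ : Ordinal) (G : Seq → Ordinal)
    (η : Seq) : Ordinal :=
  if _ : (∀ i ∈ Wset S η, i < η.getLastD lam) ∧ (Wset S η).Nonempty then
    if hc : ∃ c < κ, StationaryBelow
        {i | ∃ _ : i ∈ Wset S η, label lam S κ G (η ++ [i]) = c} (lamOf S η)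
    then hc.choose else 0
  else G η
termination_by η.getLastD lam
decreasing_by simp_all

variable {lam κ : Ordinal} {S : Set Seq} {G : Seq → Ordinal}

theorem label_of_wset_eq_empty {η : Seq} (hW : Wset S η = ∅) : label lam S κ G η = G η := by
  rw [label, dif_neg (by simp [hW])]

theorem label_spec (hS : IsLambdaSet lam S) (hgt : ∀ η ∈ Si S, κ < lamOf S η)
    (hG : ∀ η ∈ Sf S, G η < κ) (η : Seq) (hη : η ∈ S) :
    label lam S κ G η < κ ∧ ((Wset S η).Nonempty →
      StationaryBelow {i ∈ Wset S η | label lam S κ G (η ++ [i]) = label lam S κ G η}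
        (lamOf S η)) := by
  rcases (Wset S η).eq_empty_or_nonempty with hW | hW
  · rw [label_of_wset_eq_empty hW]
    exact ⟨hG η ⟨hη, hW⟩, fun h ↦ absurd h (hW ▸ not_nonempty_empty)⟩
  obtain ⟨hθ, hstat⟩ := hS.2.2.2.2.1 η hη hW
  have hκθ : κ < lamOf S η := hgt η ⟨hη, fun hf ↦ hW.ne_empty hf.2⟩
  have hchild : MapsTo (fun i ↦ label lam S κ G (η ++ [i])) (Wset S η) (Iio κ) :=
    fun i hi ↦ (label_spec hS hgt hG (η ++ [i]) hi).1
  obtain ⟨c, hc, hfiber⟩ :=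
    hstat.exists_stationaryBelow_fiber hθ.cof_ne_aleph0 (hθ.card_lt_cof hκθ) hchild
  have hex : ∃ c < κ, StationaryBelow
      {i | ∃ _ : i ∈ Wset S η, label lam S κ G (η ++ [i]) = c} (lamOf S η) :=
    ⟨c, hc, by simpa only [exists_prop] using hfiber⟩
  have hlabel : label lam S κ G η = hex.choose := by
    rw [label, dif_pos ⟨fun i ↦ hS.lt_getLastD, hW⟩, dif_pos hex]
  rw [hlabel]
  exact ⟨hex.choose_spec.1, fun _ ↦ by simpa only [exists_prop] using hex.choose_spec.2⟩
termination_by η.getLastD lam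
decreasing_by simpa using hS.lt_getLastD hi

end Label

section RootLabelSubtree

variable {α : Type*} {lam : Ordinal} {S : Set Seq} {F : Seq → α}

def IsStationaryLabeling (S : Set Seq) (F : Seq → α) : Prop :=
  ∀ η ∈ S, (Wset S η).Nonempty →
    StationaryBelow {i ∈ Wset S η | F (η ++ [i]) = F η} (lamOf S η)

def rootLabelSubtree (S : Set Seq) (F : Seq → α) : Set Seq :=
  {η ∈ S | ∀ ν, ν <+: η → F ν = F []}

theorem rootLabelSubtree_subset : rootLabelSubtree S F ⊆ S := fun _ hη ↦ hη.1

theorem wset_rootLabelSubtree {η : Seq} (hη : η ∈ rootLabelSubtree S F) :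
    Wset (rootLabelSubtree S F) η = {i ∈ Wset S η | F (η ++ [i]) = F η} := by
  have hroot : F η = F [] := hη.2 η List.prefix_rfl
  ext i
  simp only [Wset, rootLabelSubtree, mem_ofPred_eq, List.prefix_concat_iff]
  constructor
  · exact fun ⟨hi, hall⟩ ↦ ⟨hi, (hall _ (.inl rfl)).trans hroot.symm⟩
  · rintro ⟨hi, heq⟩
    refine ⟨hi, fun ν hν ↦ hν.elim (fun h ↦ h ▸ heq.trans hroot) (hη.2 ν)⟩

theorem IsStationaryLabeling.lamOf_rootLabelSubtree (hF : IsStationaryLabeling S F)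
    (hS : IsLambdaSet lam S) {η : Seq} (hη : η ∈ rootLabelSubtree S F) :
    lamOf (rootLabelSubtree S F) η = lamOf S η := by
  have hsub : Wset (rootLabelSubtree S F) η ⊆ Wset S η := fun _ hi ↦ hi.1
  rcases (Wset S η).eq_empty_or_nonempty with hW | hW
  · have hW' := subset_empty_iff.1 (hW ▸ hsub)
    rw [lamOf, lamOf, hW, hW']
  have hstat := hF η hη.1 hW
  rw [← wset_rootLabelSubtree hη] at hstat
  exact hstat.csSup_eq hsub (hS.bddAbove_wset η) (hS.2.2.2.2.1 η hη.1 hW).1.isSuccLimit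

theorem IsStationaryLabeling.isLambdaSet_rootLabelSubtree (hF : IsStationaryLabeling S F)
    (hS : IsLambdaSet lam S) : IsLambdaSet lam (rootLabelSubtree S F) := by
  have hnil : [] ∈ rootLabelSubtree S F :=
    ⟨hS.nil_mem, fun ν hν ↦ by rw [List.prefix_nil.1 hν]⟩
  refine ⟨⟨[], hnil⟩, fun η hη ↦ hS.2.1 η hη.1, fun η hη ↦ hS.2.2.1 η hη.1,
    fun η hη ν hν ↦ ⟨hS.2.2.2.1 η hη.1 ν hν, fun μ hμ ↦ hη.2 μ (hμ.trans hν)⟩,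
    fun η hη hW ↦ ?_, ?_⟩
  · have hWS : (Wset S η).Nonempty := hW.mono fun _ hi ↦ hi.1
    rw [hF.lamOf_rootLabelSubtree hS hη, wset_rootLabelSubtree hη]
    exact ⟨(hS.2.2.2.2.1 η hη.1 hWS).1, hF η hη.1 hWS⟩
  · rw [hF.lamOf_rootLabelSubtree hS hnil]
    exact hS.2.2.2.2.2

theorem IsStationaryLabeling.subLambdaSet_rootLabelSubtree (hF : IsStationaryLabeling S F)
    (hS : IsLambdaSet lam S) : SubLambdaSet (rootLabelSubtree S F) S :=
  ⟨rootLabelSubtree_subset, fun _ hη ↦ hF.lamOf_rootLabelSubtree hS hη⟩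

theorem IsStationaryLabeling.sf_rootLabelSubtree_subset (hF : IsStationaryLabeling S F) :
    Sf (rootLabelSubtree S F) ⊆ Sf S := by
  rintro η ⟨hη, hW⟩
  refine ⟨hη.1, not_nonempty_iff_eq_empty.1 fun hWS ↦ ?_⟩
  have hstat := hF η hη.1 hWS
  rw [← wset_rootLabelSubtree hη, hW] at hstat
  exact not_nonempty_empty hstat.nonempty

end RootLabelSubtree

theorem constant_on_sub_lambdaSet_general (lam : Ordinal) (S : Set Seq) (hS : IsLambdaSet lam S)
    (κ : Cardinal) (hgt : ∀ η ∈ Si S, κ.ord < lamOf S η)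
    (G : Seq → Ordinal) (hG : ∀ η ∈ Sf S, G η < κ.ord) :
    ∃ S1 : Set Seq, IsLambdaSet lam S1 ∧ SubLambdaSet S1 S ∧
      ∃ c : Ordinal, ∀ η ∈ Sf S1, G η = c := by
  set F := label lam S κ.ord G
  have hF : IsStationaryLabeling S F := fun η hη ↦ (label_spec hS hgt hG η hη).2
  refine ⟨rootLabelSubtree S F, hF.isLambdaSet_rootLabelSubtree hS,
    hF.subLambdaSet_rootLabelSubtree hS, F [], fun η hη ↦ ?_⟩
  calc G η = F η := (label_of_wset_eq_empty (hF.sf_rootLabelSubtree_subset hη).2).symm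
    _ = F [] := hη.1.2 η List.prefix_rfl

/-- Claim 3.2(1). If `S` is a `λ`-set, `κ` is regular with
`λ(η,S) > κ` for every `η ∈ S_i`, and `G : S_f → κ`, then there is a sub-`λ`-set
`S¹ ≤ S` on which `G` is constant on `S¹_f`. -/
theorem constant_on_sub_lambdaSet (lam : Ordinal) (S : Set Seq) (hS : IsLambdaSet lam S)
    (κ : Cardinal) (hκ : κ.IsRegular) (hgt : ∀ η ∈ Si S, κ.ord < lamOf S η)
    (G : Seq → Ordinal) (hG : ∀ η ∈ Sf S, G η < κ.ord) :
    ∃ S1 : Set Seq, IsLambdaSet lam S1 ∧ SubLambdaSet S1 S ∧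
      ∃ c : Ordinal, ∀ η ∈ Sf S1, G η = c :=
  constant_on_sub_lambdaSet_general lam S hS κ hgt G hG

end Sh521
end

section
/- Let S be a λ-set and F a function with domain S \ {⟨⟩} such that F(η⌢⟨α⟩) < 1 + α for every η⌢⟨α⟩ ∈ S. Then there is a sub-λ-set S¹ ≤ S on which F is essentially constant: for each m, F is constant on { η ∈ S¹ : length(η) = m } ∩ (S¹ \ {⟨⟩}). -/
open Set

/-!
Induct on a strict bound for the entries of the tree. If the root has successors, they form a
stationary subset `W` of the regular uncountable `κ = λ(⟨⟩, S)`. For `α ∈ W` with `ω ≤ α` the cone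
above `⟨α⟩` has entries below `α`, so it has a sub-`λ`-set of finite height on which `F` is
constant on each level, with values `< 1 + α = α`. These values are regressive in `α`, so finitely
many applications of Fodor's lemma (one for the height, one for each level) shrink `W` to a
stationary set on which the heights and all level values agree; grafting the chosen cones onto
this set gives the required sub-`λ`-set.
-/

namespace Sh521

def IsClubBelow (C : Set Ordinal) (κ : Ordinal) : Prop :=
  ClosedBelow C κ ∧ UnboundedBelow C κ

def diagInter (D : Ordinal → Set Ordinal) : Set Ordinal :=
  {α | ∀ γ < α, α ∈ D γ}

section Stationary

variable {κ γ : Ordinal} {C W W' : Set Ordinal}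

lemma isClubBelow_univ : IsClubBelow univ κ :=
  ⟨fun _ _ _ _ => trivial, fun α hα => ⟨α, trivial, le_rfl, hα⟩⟩

lemma IsClubBelow.inter_Ico (hC : IsClubBelow C κ) (hγ : γ < κ) :
    IsClubBelow (C ∩ Ico γ κ) κ := by
  constructor
  · intro δ hδ hlim happ
    obtain ⟨ε, ⟨-, hγε, -⟩, -, hεδ⟩ := happ 0 hlim.bot_lt
    refine ⟨hC.1 δ hδ hlim fun b hb => ?_, hγε.trans hεδ.le, hδ⟩
    obtain ⟨ε', hε', hbε'⟩ := happ b hb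
    exact ⟨ε', hε'.1, hbε'⟩
  · intro α hα
    obtain ⟨β, hβ, hαβ, hβκ⟩ := hC.2 (max α γ) (max_lt hα hγ)
    exact ⟨β, ⟨hβ, le_of_max_le_right hαβ, hβκ⟩, le_of_max_le_left hαβ, hβκ⟩

lemma closedBelow_diagInter {D : Ordinal → Set Ordinal} (hD : ∀ γ, ClosedBelow (D γ) κ) :
    ClosedBelow (diagInter D) κ := by
  intro δ hδ hlim happ γ hγδ
  refine hD γ δ hδ hlim fun β hβ => ?_
  obtain ⟨ε, hε, hε₁, hε₂⟩ := happ (max β (Order.succ γ)) (max_lt hβ (hlim.succ_lt hγδ))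
  exact ⟨ε, hε γ (Order.succ_le_iff.mp (le_of_max_le_right hε₁)), le_of_max_le_left hε₁, hε₂⟩

lemma StationaryBelow.inter_nonempty (hW : StationaryBelow W κ) (hC : IsClubBelow C κ) :
    (W ∩ C).Nonempty :=
  hW C hC.1 hC.2

lemma StationaryBelow.nonempty_s8 (hW : StationaryBelow W κ) : W.Nonempty := by
  simpa using hW.inter_nonempty isClubBelow_univ

lemma StationaryBelow.mono (hW : StationaryBelow W κ) (h : W ⊆ W') : StationaryBelow W' κ :=
  fun D hc hu => (hW D hc hu).mono (inter_subset_inter_left D h)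

lemma StationaryBelow.inter_Ico (hW : StationaryBelow W κ) (hγ : γ < κ) :
    StationaryBelow (W ∩ Ico γ κ) κ := by
  intro D hc hu
  obtain ⟨α, hαW, hαD, hαI⟩ := hW.inter_nonempty (IsClubBelow.inter_Ico ⟨hc, hu⟩ hγ)
  exact ⟨α, ⟨hαW, hαI⟩, hαD⟩

lemma StationaryBelow.sSup_eq (hκ : Order.IsSuccLimit κ) (hW : StationaryBelow W κ)
    (hlt : ∀ α ∈ W, α < κ) : sSup W = κ := by
  refine le_antisymm (csSup_le' fun α hα => (hlt α hα).le) (le_of_forall_lt fun γ hγ => ?_)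
  obtain ⟨α, hαW, hγα, -⟩ := (hW.inter_Ico (hκ.succ_lt hγ)).nonempty_s8
  exact (Order.succ_le_iff.mp hγα).trans_le (le_csSup ⟨κ, fun x hx => (hlt x hx).le⟩ hαW)

end Stationary

section Regular

variable {c : Cardinal} {W : Set Ordinal}

theorem isClubBelow_diagInter (hc : c.IsRegular) (hunc : Cardinal.aleph0 < c)
    {D : Ordinal → Set Ordinal} (hD : ∀ γ, IsClubBelow (D γ) c.ord) :
    IsClubBelow (diagInter D) c.ord := by
  have hlim : Order.IsSuccLimit c.ord := Cardinal.isSuccLimit_ord hc.aleph0_le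
  refine ⟨closedBelow_diagInter fun γ => (hD γ).1, fun β hβ => ?_⟩
  choose! d hdD hxd hdκ using fun γ => (hD γ).2
  -- `f x` lies above a point of every `D γ`, `γ ≤ x`, that is itself above `x`
  let f : Ordinal → Ordinal := fun x => (⨆ γ : Iio (x + 1), d γ x) + 1
  have hdf : ∀ x, ∀ γ ≤ x, d γ x < f x := fun x γ hγ => Order.lt_add_one_iff.mpr
    (Ordinal.le_iSup (fun γ : Iio (x + 1) => d γ x) ⟨γ, Order.lt_add_one_iff.mpr hγ⟩)
  have hxf : ∀ x < c.ord, x < f x := fun x hx => (hxd x x hx).trans_lt (hdf x x le_rfl)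
  have hfκ : ∀ x < c.ord, f x < c.ord := by
    intro x hx
    refine hlim.add_one_lt (Ordinal.lift_iSup_lt_of_lt_cof ?_ fun γ => hdκ γ x hx)
    rw [Cardinal.mk_Iio_ordinal, Cardinal.lift_lift, ← Ordinal.lift_cof,
      hc.cof_ord, Cardinal.lift_lt, ← Cardinal.lt_ord]
    exact hlim.add_one_lt hx
  have hcof : Cardinal.aleph0 < c.ord.cof := by rwa [hc.cof_ord]
  set δ := Ordinal.nfp f β
  have hδκ : δ < c.ord := Ordinal.nfp_lt_ord hcof hfκ hβ
  have hiter : ∀ n, f^[n] β < c.ord := fun n => (Ordinal.iterate_le_nfp f β n).trans_lt hδκ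
  have hδ : Order.IsSuccLimit δ := by
    refine Ordinal.isSuccLimit_iff.mpr ⟨?_, Order.isSuccPrelimit_of_succ_lt fun a ha => ?_⟩
    · exact ((zero_le (a := β)).trans_lt ((hxf β hβ).trans_le (Ordinal.iterate_le_nfp f β 1))).ne'
    · obtain ⟨n, hn⟩ := Ordinal.lt_nfp_iff.mp ha
      calc Order.succ a ≤ f^[n] β := Order.succ_le_of_lt hn
        _ < f^[n + 1] β := by rw [Function.iterate_succ_apply']; exact hxf _ (hiter n)
        _ ≤ δ := Ordinal.iterate_le_nfp f β _
  refine ⟨δ, fun γ hγ => (hD γ).1 δ hδκ hδ fun b hb => ?_, Ordinal.le_nfp f β, hδκ⟩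
  obtain ⟨n, hn⟩ := Ordinal.lt_nfp_iff.mp (max_lt hγ hb)
  refine ⟨d γ (f^[n] β), hdD γ _ (hiter n),
    (le_of_max_le_right hn.le).trans (hxd γ _ (hiter n)), ?_⟩
  calc d γ (f^[n] β) < f^[n + 1] β := by
        rw [Function.iterate_succ_apply']; exact hdf _ γ (le_of_max_le_left hn.le)
    _ ≤ δ := Ordinal.iterate_le_nfp f β _

theorem StationaryBelow.exists_stationaryBelow_fiber_s8 (hc : c.IsRegular)
    (hunc : Cardinal.aleph0 < c) (hW : StationaryBelow W c.ord) {f : Ordinal → Ordinal}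
    (hf : ∀ α ∈ W, f α < α) : ∃ γ, StationaryBelow {α ∈ W | f α = γ} c.ord := by
  by_contra! h
  have hmiss : ∀ γ, ∃ D, IsClubBelow D c.ord ∧ {α ∈ W | f α = γ} ∩ D = ∅ := by
    simpa [StationaryBelow, IsClubBelow, not_nonempty_iff_eq_empty, and_assoc] using h
  choose D hD hmissD using hmiss
  obtain ⟨α, hαW, hαD⟩ := hW.inter_nonempty (isClubBelow_diagInter hc hunc hD)
  exact (hmissD (f α)).subset ⟨⟨hαW, rfl⟩, hαD (f α) (hf α hαW)⟩

theorem StationaryBelow.exists_stationaryBelow_fiber_nat (hc : c.IsRegular)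
    (hunc : Cardinal.aleph0 < c) (hW : StationaryBelow W c.ord) (f : Ordinal → ℕ) :
    ∃ n, StationaryBelow {α ∈ W | f α = n} c.ord := by
  have hω : Ordinal.omega0 < c.ord := by rwa [← Cardinal.ord_aleph0, Cardinal.ord_lt_ord]
  obtain ⟨γ, hγ⟩ := (hW.inter_Ico hω).exists_stationaryBelow_fiber_s8 hc hunc (f := fun α => f α)
    fun α hα => (Ordinal.natCast_lt_omega0 _).trans_le hα.2.1
  obtain ⟨α, -, rfl⟩ := hγ.nonempty_s8
  exact ⟨f α, hγ.mono fun β hβ => ⟨hβ.1.1, Nat.cast_injective hβ.2⟩⟩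

theorem StationaryBelow.exists_stationaryBelow_forall_lt_eq (hc : c.IsRegular)
    (hunc : Cardinal.aleph0 < c) (hW : StationaryBelow W c.ord) (f : Ordinal → ℕ → Ordinal)
    (N : ℕ) (hf : ∀ α ∈ W, ∀ k < N, f α k < α) :
    ∃ W' ⊆ W, StationaryBelow W' c.ord ∧ ∃ g : ℕ → Ordinal, ∀ α ∈ W', ∀ k < N, f α k = g k := by
  induction N with
  | zero => exact ⟨W, subset_rfl, hW, 0, by simp⟩
  | succ N ih =>
    obtain ⟨W', hW'W, hW', g, hg⟩ := ih fun α hα k hk => hf α hα k (by omega)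
    obtain ⟨γ, hγ⟩ := hW'.exists_stationaryBelow_fiber_s8 hc hunc (f := (f · N))
      fun α hα => hf α (hW'W hα) N N.lt_add_one
    refine ⟨_, fun α hα => hW'W hα.1, hγ, Function.update g N γ, fun α hα k hk => ?_⟩
    rcases Nat.lt_add_one_iff_lt_or_eq.mp hk with hk | rfl
    · rw [Function.update_of_ne hk.ne]; exact hg α hα.1 k hk
    · rw [Function.update_self]; exact hα.2

end Regular

/-- A `λ`-set without the bound `λ` on its entries: unlike `IsLambdaSet`, this is inherited by
the cones `{ν | α :: ν ∈ T}`. -/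
structure IsStationaryTree (T : Set Seq) : Prop where
  nil_mem : [] ∈ T
  chain : ∀ η ∈ T, η.IsChain (· > ·)
  prefix_mem : ∀ η ∈ T, ∀ ν : Seq, ν <+: η → ν ∈ T
  stationary : ∀ η ∈ T, (Wset T η).Nonempty →
    IsRegUncountable (lamOf T η) ∧ StationaryBelow (Wset T η) (lamOf T η)

def cone (T : Set Seq) (α : Ordinal) : Set Seq := {ν | α :: ν ∈ T}

def graft (W : Set Ordinal) (U : Ordinal → Set Seq) : Set Seq
  | [] => True
  | α :: ν => α ∈ W ∧ ν ∈ U α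

def IsHeight (T : Set Seq) (n : ℕ) : Prop :=
  (∀ η ∈ T, η.length ≤ n) ∧ ∃ η ∈ T, η.length = n

structure IsLevelConstSubtree (F : Seq → Ordinal) (T1 T : Set Seq) : Prop where
  isStationaryTree : IsStationaryTree T1
  subLambdaSet : SubLambdaSet T1 T
  exists_isHeight : ∃ n, IsHeight T1 n
  exists_levelConst : ∃ g : ℕ → Ordinal, ∀ η ∈ T1, F η = g η.length

variable {lam : Ordinal} {S T : Set Seq} {F : Seq → Ordinal}

lemma IsLambdaSet.isStationaryTree (hS : IsLambdaSet lam S) : IsStationaryTree S :=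
  ⟨hS.2.2.2.1 _ hS.1.some_mem [] List.nil_prefix, hS.2.1, hS.2.2.2.1, hS.2.2.2.2.1⟩

lemma IsLambdaSet.of_subLambdaSet (hS : IsLambdaSet lam S) (hT : IsStationaryTree T)
    (hTS : SubLambdaSet T S) : IsLambdaSet lam T :=
  ⟨⟨[], hT.nil_mem⟩, hT.chain, fun η hη => hS.2.2.1 η (hTS.1 hη), hT.prefix_mem, hT.stationary,
    (hTS.2 [] hT.nil_mem).trans hS.2.2.2.2.2⟩

namespace IsStationaryTree

variable {α : Ordinal} {ν : Seq}

lemma pairwise (hT : IsStationaryTree T) {η : Seq} (hη : η ∈ T) : η.Pairwise (· > ·) :=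
  List.isChain_iff_pairwise.mp (hT.chain η hη)

lemma lt_of_mem_cone (hT : IsStationaryTree T) (hν : ν ∈ cone T α) {i : Ordinal} (hi : i ∈ ν) :
    i < α :=
  (List.pairwise_cons.mp (hT.pairwise hν)).1 i hi

lemma eq_nil_of_Wset_nil_eq_empty (hT : IsStationaryTree T) (h : Wset T [] = ∅) {η : Seq}
    (hη : η ∈ T) : η = [] := by
  obtain _ | ⟨a, η⟩ := η
  · rfl
  · have ha : a ∈ Wset T [] :=
      hT.prefix_mem _ hη [a] (List.cons_prefix_cons.mpr ⟨rfl, List.nil_prefix⟩)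
    simp [h] at ha

end IsStationaryTree

lemma isStationaryTree_cone {α : Ordinal} (hT : IsStationaryTree T) (hα : [α] ∈ T) :
    IsStationaryTree (cone T α) where
  nil_mem := hα
  chain _ hν := List.isChain_iff_pairwise.mpr (hT.pairwise hν).of_cons
  prefix_mem _ hν _ hμ := hT.prefix_mem _ hν _ (List.cons_prefix_cons.mpr ⟨rfl, hμ⟩)
  stationary ν hν := hT.stationary (α :: ν) hν

lemma IsRegUncountable.isSuccLimit_s8 {κ : Ordinal} (h : IsRegUncountable κ) :
    Order.IsSuccLimit κ := by
  obtain ⟨c, hc, -, rfl⟩ := h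
  exact Cardinal.isSuccLimit_ord hc.aleph0_le

lemma IsHeight.exists_length_eq {n k : ℕ} (h : IsHeight T n) (hT : IsStationaryTree T)
    (hk : k ≤ n) : ∃ η ∈ T, η.length = k := by
  obtain ⟨η, hη, rfl⟩ := h.2
  exact ⟨η.take k, hT.prefix_mem η hη _ (List.take_prefix k η), by simp [hk]⟩

lemma IsStationaryTree.isLevelConstSubtree_self_of_Wset_nil_eq_empty (hT : IsStationaryTree T)
    (h : Wset T [] = ∅) (F : Seq → Ordinal) : IsLevelConstSubtree F T T where
  isStationaryTree := hT
  subLambdaSet := ⟨subset_rfl, fun _ _ => rfl⟩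
  exists_isHeight := ⟨0, fun η hη => by simp [hT.eq_nil_of_Wset_nil_eq_empty h hη],
    [], hT.nil_mem, rfl⟩
  exists_levelConst := ⟨fun _ => F [], fun η hη => by rw [hT.eq_nil_of_Wset_nil_eq_empty h hη]⟩

section Graft

variable {W : Set Ordinal} {U : Ordinal → Set Seq} {α : Ordinal} {ν : Seq}

@[simp] lemma cons_mem_graft : α :: ν ∈ graft W U ↔ α ∈ W ∧ ν ∈ U α := Iff.rfl

lemma Wset_graft_nil (hU : ∀ α ∈ W, [] ∈ U α) : Wset (graft W U) [] = W := by
  ext α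
  simpa [Wset] using hU α

lemma Wset_graft_cons (hα : α ∈ W) : Wset (graft W U) (α :: ν) = Wset (U α) ν := by
  ext i
  simp [Wset, hα]

lemma lamOf_graft_cons (hα : α ∈ W) : lamOf (graft W U) (α :: ν) = lamOf (U α) ν := by
  rw [lamOf, Wset_graft_cons hα, lamOf]

lemma isHeight_graft (hW : W.Nonempty) {N : ℕ} (hU : ∀ α ∈ W, IsHeight (U α) N) :
    IsHeight (graft W U) (N + 1) := by
  refine ⟨fun η hη => ?_, ?_⟩
  · obtain _ | ⟨α, ν⟩ := η
    · simp
    · simpa using (hU α hη.1).1 ν hη.2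
  · obtain ⟨α, hα⟩ := hW
    obtain ⟨ν, hν, hlen⟩ := (hU α hα).2
    exact ⟨α :: ν, ⟨hα, hν⟩, by simp [hlen]⟩

lemma graft_subset (hT : IsStationaryTree T) (hU : ∀ α ∈ W, U α ⊆ cone T α) :
    graft W U ⊆ T := by
  rintro (_ | ⟨α, ν⟩) hη
  · exact hT.nil_mem
  · exact hU α hη.1 hη.2

lemma subLambdaSet_graft (hT : IsStationaryTree T) (hκ : IsRegUncountable (lamOf T []))
    (hW : StationaryBelow W (lamOf T [])) (hWlt : ∀ α ∈ W, α < lamOf T [])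
    (hU : ∀ α ∈ W, IsStationaryTree (U α) ∧ SubLambdaSet (U α) (cone T α)) :
    SubLambdaSet (graft W U) T := by
  refine ⟨graft_subset hT fun α hα => (hU α hα).2.1, ?_⟩
  rintro (_ | ⟨α, ν⟩) hη
  · rw [lamOf, Wset_graft_nil fun α hα => (hU α hα).1.nil_mem]
    exact hW.sSup_eq hκ.isSuccLimit_s8 hWlt
  · rw [lamOf_graft_cons hη.1]
    exact (hU α hη.1).2.2 ν hη.2

lemma isStationaryTree_graft (hT : IsStationaryTree T) (hκ : IsRegUncountable (lamOf T []))
    (hW : StationaryBelow W (lamOf T [])) (hWlt : ∀ α ∈ W, α < lamOf T [])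
    (hU : ∀ α ∈ W, IsStationaryTree (U α) ∧ SubLambdaSet (U α) (cone T α)) :
    IsStationaryTree (graft W U) := by
  have hsub := subLambdaSet_graft hT hκ hW hWlt hU
  refine ⟨trivial, fun η hη => hT.chain η (hsub.1 hη), ?_, ?_⟩
  · rintro (_ | ⟨α, ν⟩) hη μ hμ
    · rw [List.prefix_nil.mp hμ]
      trivial
    · obtain _ | ⟨b, μ⟩ := μ
      · trivial
      · obtain ⟨rfl, hμν⟩ := List.cons_prefix_cons.mp hμ
        exact ⟨hη.1, (hU b hη.1).1.prefix_mem ν hη.2 μ hμν⟩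
  · rintro (_ | ⟨α, ν⟩) hη hne
    · rw [hsub.2 [] trivial, Wset_graft_nil fun α hα => (hU α hα).1.nil_mem]
      exact ⟨hκ, hW⟩
    · rw [Wset_graft_cons hη.1] at hne ⊢
      rw [lamOf_graft_cons hη.1]
      exact (hU α hη.1).1.stationary ν hη.2 hne

end Graft

lemma lt_of_forall_mem_le (hF : ∀ η a, η ++ [a] ∈ T → F (η ++ [a]) < 1 + a) {η : Seq}
    (hη : η ∈ T) (hne : η ≠ []) {α : Ordinal} (hα : Ordinal.omega0 ≤ α)
    (hle : ∀ i ∈ η, i ≤ α) : F η < α := by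
  obtain ⟨μ, a, rfl⟩ : ∃ μ a, η = μ ++ [a] :=
    ⟨η.dropLast, η.getLast hne, (List.dropLast_append_getLast hne).symm⟩
  calc F (μ ++ [a]) < 1 + a := hF μ a hη
    _ ≤ 1 + α := by gcongr; exact hle a (by simp)
    _ = α := Ordinal.one_add_of_omega0_le hα

theorem exists_isLevelConstSubtree_of_cones (hT : IsStationaryTree T)
    (hne : (Wset T []).Nonempty) (hF : ∀ η a, η ++ [a] ∈ T → F (η ++ [a]) < 1 + a)
    (hcone : ∀ α ∈ Wset T [], ∃ U, IsLevelConstSubtree (fun ν => F (α :: ν)) U (cone T α)) :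
    ∃ T1, IsLevelConstSubtree F T1 T := by
  obtain ⟨hκ, hstat⟩ := hT.stationary [] hT.nil_mem hne
  obtain ⟨c, hc, hunc, hκc⟩ := hκ
  have hω : Ordinal.omega0 < c.ord := by rwa [← Cardinal.ord_aleph0, Cardinal.ord_lt_ord]
  set W0 := Wset T [] ∩ Ico Ordinal.omega0 c.ord
  have hW0 : StationaryBelow W0 c.ord := (hκc ▸ hstat).inter_Ico hω
  choose! U hU using fun α (hα : α ∈ W0) => hcone α hα.1
  choose! n hn using fun α (hα : α ∈ W0) => (hU α hα).exists_isHeight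
  choose! g hg using fun α (hα : α ∈ W0) => (hU α hα).exists_levelConst
  -- every level of `U α` is inhabited, and `F (α :: ν) < α` since `ω ≤ α` bounds all entries
  have hg_lt : ∀ α ∈ W0, ∀ k < n α + 1, g α k < α := by
    intro α hα k hk
    obtain ⟨ν, hν, rfl⟩ :=
      (hn α hα).exists_length_eq (hU α hα).isStationaryTree (Nat.lt_add_one_iff.mp hk)
    have hνT : ν ∈ cone T α := (hU α hα).subLambdaSet.1 hν
    rw [← hg α hα ν hν]
    refine lt_of_forall_mem_le hF hνT (List.cons_ne_nil _ _) hα.2.1 ?_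
    simpa using fun i hi => (hT.lt_of_mem_cone hνT hi).le
  obtain ⟨N, hW1⟩ := hW0.exists_stationaryBelow_fiber_nat hc hunc n
  obtain ⟨W2, hW21, hW2, G, hG⟩ := hW1.exists_stationaryBelow_forall_lt_eq hc hunc g (N + 1)
    fun α hα => hα.2 ▸ hg_lt α hα.1
  have hW20 : W2 ⊆ W0 := fun α hα => (hW21 hα).1
  have hUW2 : ∀ α ∈ W2, IsStationaryTree (U α) ∧ SubLambdaSet (U α) (cone T α) :=
    fun α hα => ⟨(hU α (hW20 hα)).isStationaryTree, (hU α (hW20 hα)).subLambdaSet⟩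
  have hW2lt : ∀ α ∈ W2, α < lamOf T [] := fun α hα => hκc ▸ (hW20 hα).2.2
  refine ⟨graft W2 U, isStationaryTree_graft hT ⟨c, hc, hunc, hκc⟩ (hκc ▸ hW2) hW2lt hUW2,
    subLambdaSet_graft hT ⟨c, hc, hunc, hκc⟩ (hκc ▸ hW2) hW2lt hUW2,
    ⟨N + 1, isHeight_graft hW2.nonempty_s8 fun α hα => (hW21 hα).2 ▸ hn α (hW20 hα)⟩,
    fun | 0 => F [] | k + 1 => G k, ?_⟩
  rintro (_ | ⟨α, ν⟩) hη
  · rfl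
  · have hlen : ν.length < N + 1 :=
      Nat.lt_add_one_of_le ((hn α (hW20 hη.1)).1 ν hη.2 |>.trans_eq (hW21 hη.1).2)
    exact (hg α (hW20 hη.1) ν hη.2).trans (hG α hη.1 _ hlen)

-- induction on a strict bound `β` for the entries: the cone at `α` has its entries below `α < β`
theorem exists_isLevelConstSubtree {β : Ordinal} (hT : IsStationaryTree T)
    (hβ : ∀ η ∈ T, ∀ i ∈ η, i < β) (hF : ∀ η a, η ++ [a] ∈ T → F (η ++ [a]) < 1 + a) :
    ∃ T1, IsLevelConstSubtree F T1 T := by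
  induction β using WellFoundedLT.induction generalizing T F with
  | _ β ih =>
  rcases (Wset T []).eq_empty_or_nonempty with h | h
  · exact ⟨T, hT.isLevelConstSubtree_self_of_Wset_nil_eq_empty h F⟩
  · exact exists_isLevelConstSubtree_of_cones hT h hF fun α hα =>
      ih α (hβ [α] hα α (List.mem_singleton_self α)) (isStationaryTree_cone hT hα)
        (fun _ hν _ hi => hT.lt_of_mem_cone hν hi) fun η a h => hF (α :: η) a h

/-- Claim 3.2(5). If `S` is a `λ`-set and `F` satisfies
`F(η⌢⟨α⟩) < 1 + α` for all `η⌢⟨α⟩ ∈ S`, then `F` is essentially constant on some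
sub-`λ`-set `S¹ ≤ S`: constant on the nonempty elements of each fixed length. -/
theorem essentially_constant_on_sub_lambdaSet (lam : Ordinal) (S : Set Seq)
    (hS : IsLambdaSet lam S) (F : Seq → Ordinal)
    (hF : ∀ (η : Seq) (α : Ordinal), η ++ [α] ∈ S → F (η ++ [α]) < 1 + α) :
    ∃ S1 : Set Seq, IsLambdaSet lam S1 ∧ SubLambdaSet S1 S ∧
      ∀ m : ℕ, ∀ η ∈ S1, ∀ ν ∈ S1, η ≠ [] → ν ≠ [] →
        η.length = m → ν.length = m → F η = F ν := by
  obtain ⟨S1, hS1, hsub, -, g, hg⟩ := exists_isLevelConstSubtree hS.isStationaryTree hS.2.2.1 hF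
  refine ⟨S1, hS.of_subLambdaSet hS1 hsub, hsub, fun m η hη ν hν _ _ hηm hνm => ?_⟩
  rw [hg η hη, hg ν hν, hηm, hνm]

end Sh521
end

section
/- Suppose λ is a regular uncountable cardinal, ⟨B_η : η ∈ S_c⟩ is a λ-system, and for each η ∈ S_f, s_η is a nonempty subset of ⋃_{ℓ < length(η)} B_{η↾(ℓ+1)}. Then the indexed family { s_η : η ∈ S_f } has no transversal (no injective choice function η ↦ x_η with x_η ∈ s_η). -/
open Set

/-!
Induct on `λ(⟨⟩,S)`. Given a transversal `g`, for every `i ∈ W(⟨⟩,S)` some final `η` extending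
`⟨i⟩` has `g η ∈ B_⟨i⟩`: otherwise the subtree above `⟨i⟩` (with `λ(⟨i⟩,S) ≤ i < λ`) and the
sets `s_η \ B_⟨i⟩` would be a smaller counterexample. This yields an injective `f` on the
stationary set `W(⟨⟩,S)` with `f i ∈ B_⟨i⟩`. As `|B_⟨j⟩| < λ`, only boundedly many `i` have
`f i ∈ B_⟨j⟩`, say all `i < b j`. A limit `δ ∈ W(⟨⟩,S)` closed under `b` exists by stationarity,
and continuity puts `f δ` into some `B_⟨j⟩` with `j < δ`, so `δ < b j < δ`.
-/

namespace Sh521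

open Cardinal Function Order

universe u

theorem iSup_Iio_lt_ord {κ : Cardinal.{u}} (hκ : κ.IsRegular) {x : Ordinal.{u}} (hx : x < κ.ord)
    {f : Ordinal.{u} → Ordinal.{u}} (hf : ∀ j < x, f j < κ.ord) : ⨆ j : Iio x, f j < κ.ord := by
  refine Ordinal.lift_iSup_lt_of_lt_cof ?_ fun j => hf j j.2
  rw [mk_Iio_ordinal, lift_lift, ← Ordinal.lift_cof, hκ.cof_ord, lift_lt]
  exact lt_ord.mp hx

def limitClosurePoints (b : Ordinal → Ordinal) (κ : Ordinal) : Set Ordinal :=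
  {δ | δ < κ ∧ IsSuccLimit δ ∧ ∀ j < δ, b j < δ}

theorem closedBelow_limitClosurePoints (b : Ordinal → Ordinal) (κ : Ordinal) :
    ClosedBelow (limitClosurePoints b κ) κ := by
  intro δ hδ hlim happ
  refine ⟨hδ, hlim, fun j hj => ?_⟩
  obtain ⟨γ, ⟨-, -, hγ⟩, hjγ, hγδ⟩ := happ (succ j) (hlim.succ_lt hj)
  exact (hγ j (succ_le_iff.mp hjγ)).trans hγδ

theorem unboundedBelow_limitClosurePoints {κ : Cardinal.{u}} (hκ : κ.IsRegular)
    (hunc : ℵ₀ < κ) {b : Ordinal.{u} → Ordinal.{u}} (hb : ∀ j < κ.ord, b j < κ.ord) :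
    UnboundedBelow (limitClosurePoints b κ.ord) κ.ord := by
  intro a ha
  have hκlim := isSuccLimit_ord hunc.le
  let F : Ordinal → Ordinal := fun x => succ (max x (⨆ j : Iio x, b j))
  have hF : ∀ x < κ.ord, F x < κ.ord := fun x hx =>
    hκlim.succ_lt (max_lt hx (iSup_Iio_lt_ord hκ hx fun j hj => hb j (hj.trans hx)))
  have lt_F : ∀ x, x < F x := fun x => lt_succ_of_le (le_max_left _ _)
  have b_lt_F : ∀ x, ∀ j < x, b j < F x := fun x j hj =>
    lt_succ_of_le ((Ordinal.le_iSup (fun j : Iio x => b j) ⟨j, hj⟩).trans (le_max_right _ _))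
  set δ := Ordinal.nfp F (succ a)
  have below_iterate : ∀ j < δ, ∃ n, j < F^[n] (succ a) := fun j => Ordinal.lt_nfp_iff.mp
  have next_le : ∀ n, F (F^[n] (succ a)) ≤ δ := fun n => by
    simpa only [Function.iterate_succ_apply'] using Ordinal.iterate_le_nfp F (succ a) (n + 1)
  have ha_lt : a < δ := (lt_succ a).trans_le (Ordinal.le_nfp F _)
  have hδ : δ < κ.ord := Ordinal.nfp_lt_ord (by rwa [hκ.cof_ord]) hF (hκlim.succ_lt ha)
  refine ⟨δ, ⟨hδ, ?_, fun j hj => ?_⟩, ha_lt.le, hδ⟩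
  · refine ⟨not_isMin_of_lt ha_lt, isSuccPrelimit_of_succ_lt fun j hj => ?_⟩
    obtain ⟨n, hn⟩ := below_iterate j hj
    exact ((succ_le_of_lt hn).trans_lt (lt_F _)).trans_le (next_le n)
  · obtain ⟨n, hn⟩ := below_iterate j hj
    exact (b_lt_F _ j hn).trans_le (next_le n)

theorem StationaryBelow.not_injOn {α : Type u} {κ : Cardinal.{u}} (hκ : κ.IsRegular)
    (hunc : ℵ₀ < κ) {W : Set Ordinal.{u}} (hW : StationaryBelow W κ.ord) {B : Ordinal → Set α}
    (hcont : ∀ δ < κ.ord, IsSuccLimit δ → B δ = ⋃ i ∈ Iio δ, B i)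
    (hcard : ∀ i < κ.ord, #(B i) < κ) {f : Ordinal → α} (hf : ∀ i ∈ W ∩ Iio κ.ord, f i ∈ B i) :
    ¬ InjOn f (W ∩ Iio κ.ord) := by
  intro hinj
  set W' := W ∩ Iio κ.ord
  -- `b j` bounds the indices `i ∈ W'` with `f i ∈ B j`: there are fewer than `κ` of them
  let b : Ordinal → Ordinal := fun j => ⨆ x : ↥(B j ∩ f '' W'), succ (invFunOn f W' x)
  have hb : ∀ j < κ.ord, b j < κ.ord := fun j hj =>
    Ordinal.iSup_lt_of_lt_cof
      (by rw [hκ.cof_ord]; exact (mk_le_mk_of_subset inter_subset_left).trans_lt (hcard j hj))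
      fun x => (isSuccLimit_ord hunc.le).succ_lt (invFunOn_mem x.2.2).2
  have lt_b : ∀ i ∈ W', ∀ j, f i ∈ B j → i < b j := by
    intro i hi j hij
    have := Ordinal.le_iSup (fun x : ↥(B j ∩ f '' W') => succ (invFunOn f W' x))
      ⟨f i, hij, mem_image_of_mem f hi⟩
    rw [hinj.leftInvOn_invFunOn hi] at this
    exact (lt_succ i).trans_le this
  obtain ⟨i, hiW, hiκ, hlim, hclosed⟩ := hW _ (closedBelow_limitClosurePoints b κ.ord)
    (unboundedBelow_limitClosurePoints hκ hunc hb)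
  obtain ⟨j, hji, hj⟩ : ∃ j < i, f i ∈ B j := by
    simpa [hcont i hiκ hlim] using hf i ⟨hiW, hiκ⟩
  exact (hclosed j hji).asymm (lt_b i ⟨hiW, hiκ⟩ j hj)

theorem mem_biUnion_take_tail {β γ : Type*} {B : List β → Set γ} {i : β} {ν : List β} {x : γ}
    (hx : x ∈ ⋃ ℓ ∈ Finset.range (i :: ν).length, B ((i :: ν).take (ℓ + 1))) (hi : x ∉ B [i]) :
    x ∈ ⋃ ℓ ∈ Finset.range ν.length, B (i :: ν.take (ℓ + 1)) := by
  simp only [mem_iUnion, Finset.mem_range, List.length_cons, List.take_succ_cons] at hx ⊢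
  obtain ⟨ℓ, hℓ, hxB⟩ := hx
  cases ℓ with
  | zero => exact absurd hxB hi
  | succ m => exact ⟨m, by omega, hxB⟩

theorem lamOf_singleton_le {S : Set Seq} (hchain : ∀ η ∈ S, List.IsChain (· > ·) η)
    (i : Ordinal) : lamOf S [i] ≤ i :=
  csSup_le' fun _ hj => (List.isChain_cons_cons.mp (hchain _ hj)).1.le

theorem not_injOn_Sf {α : Type u} {S : Set Seq.{u}} (hroot : [] ∈ S)
    (hchain : ∀ η ∈ S, List.IsChain (· > ·) η)
    (hstat : ∀ η ∈ S, (Wset S η).Nonempty →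
      IsRegUncountable (lamOf S η) ∧ StationaryBelow (Wset S η) (lamOf S η))
    {B : Seq → Set α}
    (hcont : ∀ η ∈ Si S, ∀ δ < lamOf S η, IsSuccLimit δ →
      B (η ++ [δ]) = ⋃ i ∈ Iio δ, B (η ++ [i]))
    (hcard : ∀ η ∈ Si S, ∀ i < lamOf S η, #(B (η ++ [i])) < (lamOf S η).card)
    {g : Seq → α} (hg : ∀ η ∈ Sf S, g η ∈ ⋃ ℓ ∈ Finset.range η.length, B (η.take (ℓ + 1))) :
    ¬ InjOn g (Sf S) := by
  induction hS : lamOf S [] using WellFoundedLT.induction generalizing S B g with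
  | ind o IH =>
  intro hinj
  by_cases hW : (Wset S []).Nonempty
  swap
  · simpa using hg [] ⟨hroot, not_nonempty_iff_eq_empty.mp hW⟩
  have hSi : [] ∈ Si S := ⟨hroot, fun h => hW.ne_empty h.2⟩
  obtain ⟨⟨κ, hκ, hunc, hκo⟩, hstat₀⟩ := hstat [] hroot hW
  have leaf : ∀ i ∈ Wset S [] ∩ Iio κ.ord, ∃ t, i :: t ∈ Sf S ∧ g (i :: t) ∈ B [i] := by
    rintro i ⟨hiW, hiκ⟩
    by_contra! hno
    refine IH (lamOf S [i]) ?_ (S := {ν | i :: ν ∈ S}) hiW (fun ν hν => (hchain _ hν).tail)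
      (fun ν hν => hstat (i :: ν) hν) (B := fun ν => B (i :: ν))
      (fun ν hν => hcont (i :: ν) hν) (fun ν hν => hcard (i :: ν) hν) (g := fun ν => g (i :: ν))
      (fun ν hν => mem_biUnion_take_tail (hg _ hν) (hno ν hν)) rfl
      (fun ν₁ h₁ ν₂ h₂ he => (List.cons.inj (hinj h₁ h₂ he)).2)
    rw [← hS, hκo]
    exact (lamOf_singleton_le hchain i).trans_lt hiκ
  choose! t ht using leaf
  have hcont₀ := hcont [] hSi
  have hcard₀ := hcard [] hSi
  rw [hκo] at hstat₀ hcont₀ hcard₀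
  exact hstat₀.not_injOn hκ hunc (B := fun i => B [i]) hcont₀
    (fun i hi => by simpa using hcard₀ i hi) (f := fun i => g (i :: t i))
    (fun i hi => (ht i hi).2)
    fun i hi i' hi' he => (List.cons.inj (hinj (ht i hi).1 (ht i' hi').1 he)).1

theorem no_transversal_of_lambdaSystem_general {α : Type*} (lam : Cardinal)
    (S : Set Seq) (hS : IsLambdaSet lam.ord S)
    (B : Seq → Set α)
    (hcont : ∀ η ∈ Si S, ∀ δ : Ordinal, δ < lamOf S η → Order.IsSuccLimit δ →
      B (η ++ [δ]) = ⋃ i ∈ Iio δ, B (η ++ [i]))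
    (hcard : ∀ η ∈ Si S, ∀ i : Ordinal, i < lamOf S η →
      Cardinal.mk ↥(B (η ++ [i])) < (lamOf S η).card)
    (s : Seq → Set α)
    (hsub : ∀ η ∈ Sf S, s η ⊆ ⋃ ℓ ∈ Finset.range η.length, B (η.take (ℓ + 1))) :
    ¬ ∃ g : Seq → α, (∀ η ∈ Sf S, g η ∈ s η) ∧ Set.InjOn g (Sf S) := by
  rintro ⟨g, hg, hinj⟩
  obtain ⟨⟨η₀, hη₀⟩, hchain, -, hprefix, hstat, -⟩ := hS
  exact not_injOn_Sf (hprefix η₀ hη₀ [] η₀.nil_prefix) hchain hstat hcont hcard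
    (fun η hη => hsub η hη (hg η hη)) hinj

/-- Claim 3.5. If `⟨B_η : η ∈ S_c⟩` is a `λ`-system over a `λ`-set `S`
(increasing, continuous, with `|B_{η⌢⟨i⟩}| < λ(η,S)`) and for each `η ∈ S_f` the set
`s_η` is a nonempty subset of `⋃_{ℓ < lg(η)} B_{η↾(ℓ+1)}`, then `{ s_η : η ∈ S_f }`
has no transversal (injective choice function). -/
theorem no_transversal_of_lambdaSystem {α : Type*} (lam : Cardinal)
    (hreg : lam.IsRegular) (hunc : Cardinal.aleph0 < lam)
    (S : Set Seq) (hS : IsLambdaSet lam.ord S)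
    (B : Seq → Set α)
    (hmono : ∀ η ∈ Si S, ∀ i j : Ordinal, i < j → j < lamOf S η →
      B (η ++ [i]) ⊆ B (η ++ [j]))
    (hcont : ∀ η ∈ Si S, ∀ δ : Ordinal, δ < lamOf S η → Order.IsSuccLimit δ →
      B (η ++ [δ]) = ⋃ i ∈ Iio δ, B (η ++ [i]))
    (hcard : ∀ η ∈ Si S, ∀ i : Ordinal, i < lamOf S η →
      Cardinal.mk ↥(B (η ++ [i])) < (lamOf S η).card)
    (s : Seq → Set α)
    (hne : ∀ η ∈ Sf S, (s η).Nonempty)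
    (hsub : ∀ η ∈ Sf S, s η ⊆ ⋃ ℓ ∈ Finset.range η.length, B (η.take (ℓ + 1))) :
    ¬ ∃ g : Seq → α, (∀ η ∈ Sf S, g η ∈ s η) ∧ Set.InjOn g (Sf S) :=
  no_transversal_of_lambdaSystem_general lam S hS B hcont hcard s hsub

end Sh521
end

section
/- Let N be the free group on { b_{ℓ,m} : 1 ≤ ℓ < n, m < ω } ∪ { y_m : m < ω } with b_{0,0} := y_0 and b_{0,m+1} := b_{1,m+1} ⋯ b_{n-1,m+1} b_{0,m} (y_{m+1})². Then for no free group F is the quotient of the free product N * F by the normal closure of { b_{ℓ,m} : ℓ < n, m < ω } a free group; equivalently, N * F has no free basis extending { b_{ℓ,m} : ℓ < n, m < ω }. -/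
/-!
Modulo the `b_{ℓ,m}`, the defining relation `b_{0,1} = b_{1,1} ⋯ b_{n-1,1} b_{0,0} y_1²` becomes
`y_1² = 1`. On the other hand `y_1` survives in the quotient: the character to `{±1}` sending every
`y_{m+1}` to `-1` and all other generators to `1` kills each `b_{0,m}`, in which the `y_{m+1}` occur
only squared. So the quotient has an element of order two, while free groups are torsion-free.
A free basis `X ⊇ {b_{ℓ,m}}` of `N ∗ F` would make the quotient free on `X \ {b_{ℓ,m}}`.
-/

namespace Sh521

/-- Free generators of `N`: the `b_{ℓ,m}` for `1 ≤ ℓ < n` and the `y_m`. -/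
abbrev Gen (n : ℕ) := ({i : Fin n // (i : ℕ) ≠ 0} × ℕ) ⊕ ℕ

/-- The generator `y_m`. -/
def y (n : ℕ) (m : ℕ) : FreeGroup (Gen n) := FreeGroup.of (Sum.inr m)

/-- The recursively defined elements `b_{0,m}`:
`b_{0,0} = y_0` and `b_{0,m+1} = b_{1,m+1} ⋯ b_{n-1,m+1} b_{0,m} (y_{m+1})²`. -/
def b0 (n : ℕ) : ℕ → FreeGroup (Gen n)
  | 0 => FreeGroup.of (Sum.inr 0)
  | m + 1 =>
      (((List.finRange n).map fun ℓ : Fin n =>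
        if h : (ℓ : ℕ) = 0 then 1
        else FreeGroup.of (Sum.inl (⟨ℓ, h⟩, m + 1)))).prod
        * b0 n m * (FreeGroup.of (Sum.inr (m + 1))) ^ 2

/-- The elements `b_{ℓ,m}` of `N`: generators for `ℓ ≠ 0`, and the recursively defined
words `b_{0,m}` for `ℓ = 0`. -/
def b (n : ℕ) (ℓ : Fin n) (m : ℕ) : FreeGroup (Gen n) :=
  if h : (ℓ : ℕ) = 0 then b0 n m else FreeGroup.of (Sum.inl (⟨ℓ, h⟩, m))

/-- `X` is a free basis of the group `G`. -/
def IsFreeBasis (G : Type*) [Group G] (X : Set G) : Prop :=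
  ∃ e : FreeGroup X ≃* G, ∀ x : X, e (FreeGroup.of x) = (x : G)

open Monoid.Coprod Subgroup

instance IsFreeGroup.isMulTorsionFree (G : Type*) [Group G] [IsFreeGroup G] :
    IsMulTorsionFree G :=
  Function.Injective.isMulTorsionFree (IsFreeGroup.toFreeGroup G).toMonoidHom
    (IsFreeGroup.toFreeGroup G).injective

theorem IsFreeBasis.isFreeGroup_quotient_normalClosure {G : Type*} [Group G] {X S : Set G}
    (hX : IsFreeBasis G X) (hSX : S ⊆ X) : IsFreeGroup (G ⧸ normalClosure S) := by
  classical
  obtain ⟨e, he⟩ := hX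
  have e_symm_of (x : X) : e.symm x = FreeGroup.of x := e.symm_apply_eq.2 (he x).symm
  let ρ : G →* FreeGroup ↥(X \ S) :=
    (FreeGroup.lift fun x : X => if h : (x : G) ∈ S then 1 else FreeGroup.of ⟨x, x.2, h⟩).comp
      e.symm.toMonoidHom
  have ρ_of (x : X) : ρ x = if h : (x : G) ∈ S then 1 else FreeGroup.of ⟨x, x.2, h⟩ := by
    simp [ρ, e_symm_of]
  have hS : normalClosure S ≤ ρ.ker :=
    normalClosure_le_normal fun s hs => by simp [ρ_of ⟨s, hSX hs⟩, hs]
  let j : FreeGroup ↥(X \ S) →* G ⧸ normalClosure S := FreeGroup.lift fun t => (t : G)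
  refine IsFreeGroup.ofMulEquiv (MonoidHom.toMulEquiv j (QuotientGroup.lift _ ρ hS) ?_ ?_)
  · ext t
    simp [j, ρ_of ⟨t, t.2.1⟩, t.2.2]
  · refine QuotientGroup.monoidHom_ext _
      ((MonoidHom.cancel_right (f := e.toMonoidHom) e.surjective).1 ?_)
    refine FreeGroup.ext_hom _ _ fun x => ?_
    simp only [MonoidHom.comp_apply, MulEquiv.coe_toMonoidHom, he, QuotientGroup.mk'_apply,
      QuotientGroup.lift_mk, ρ_of, MonoidHom.id_apply]
    split_ifs with hx
    · rw [map_one, eq_comm, QuotientGroup.eq_one_iff]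
      exact subset_normalClosure hx
    · simp [j]

def relators (n : ℕ) (ι : Type*) : Set (Monoid.Coprod (FreeGroup (Gen n)) (FreeGroup ι)) :=
  {x | ∃ (ℓ : Fin n) (m : ℕ), x = inl (b n ℓ m)}

def bProd (n k : ℕ) : FreeGroup (Gen n) :=
  ((List.finRange n).map fun ℓ : Fin n =>
    if h : (ℓ : ℕ) = 0 then 1 else FreeGroup.of (Sum.inl (⟨ℓ, h⟩, k))).prod

variable {n : ℕ} {ι : Type*}

theorem b0_succ (m : ℕ) : b0 n (m + 1) = bProd n (m + 1) * b0 n m * y n (m + 1) ^ 2 := rfl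

theorem map_bProd_eq_one {H : Type*} [Group H] (f : FreeGroup (Gen n) →* H) (k : ℕ)
    (hf : ∀ i, f (FreeGroup.of (Sum.inl (i, k))) = 1) : f (bProd n k) = 1 := by
  rw [bProd, map_list_prod, List.map_map]
  refine List.prod_eq_one ?_
  simp only [List.mem_map, Function.comp_apply]
  rintro _ ⟨ℓ, -, rfl⟩
  split_ifs
  exacts [map_one f, hf _]

theorem map_y_succ_sq_eq_one (hn : 1 ≤ n) {H : Type*} [Group H] (f : FreeGroup (Gen n) →* H)
    (hf : ∀ ℓ m, f (b n ℓ m) = 1) (m : ℕ) : f (y n (m + 1)) ^ 2 = 1 := by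
  have hb0 (k : ℕ) : f (b0 n k) = 1 := hf ⟨0, hn⟩ k
  have hbProd : f (bProd n (m + 1)) = 1 :=
    map_bProd_eq_one f _ fun i => by simpa [b, i.2] using hf i (m + 1)
  simpa [b0_succ, hb0, hbProd] using hb0 (m + 1)

theorem sq_y_succ_mem_normalClosure (hn : 1 ≤ n) (m : ℕ) :
    inl (y n (m + 1) ^ 2) ∈ normalClosure (relators n ι) := by
  rw [← QuotientGroup.eq_one_iff, map_pow, QuotientGroup.mk_pow]
  refine map_y_succ_sq_eq_one hn ((QuotientGroup.mk' _).comp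
    (inl : FreeGroup (Gen n) →* Monoid.Coprod (FreeGroup (Gen n)) (FreeGroup ι))) (fun ℓ k => ?_) m
  exact (QuotientGroup.eq_one_iff _).2 (subset_normalClosure ⟨ℓ, k, rfl⟩)

theorem y_succ_notMem_normalClosure (m : ℕ) :
    inl (y n (m + 1)) ∉ normalClosure (relators n ι) := by
  let χ : FreeGroup (Gen n) →* ℤˣ :=
    FreeGroup.lift (Sum.elim 1 fun k => if k = 0 then 1 else -1)
  have hχ : relators n ι ⊆ (Monoid.Coprod.lift χ (1 : FreeGroup ι →* ℤˣ)).ker := by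
    have hb0 (k : ℕ) : χ (b0 n k) = 1 := by
      induction k with
      | zero => simp [b0, χ]
      | succ k ih => simp [b0_succ, ih, map_bProd_eq_one χ, χ, y]
    rintro _ ⟨ℓ, k, rfl⟩
    by_cases hℓ : (ℓ : ℕ) = 0
    · simp [b, hℓ, hb0]
    · simp [b, hℓ, χ]
  intro h
  have := normalClosure_le_normal hχ h
  simp [χ, y] at this

theorem not_isFreeGroup_quotient (hn : 1 ≤ n) :
    ¬ IsFreeGroup (Monoid.Coprod (FreeGroup (Gen n)) (FreeGroup ι) ⧸
      normalClosure (relators n ι)) := by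
  intro hfree
  have hsq := sq_y_succ_mem_normalClosure (ι := ι) hn 0
  rw [← QuotientGroup.eq_one_iff, map_pow, QuotientGroup.mk_pow, sq_eq_one,
    QuotientGroup.eq_one_iff] at hsq
  exact y_succ_notMem_normalClosure 0 hsq

/-- clause (iv) of the `n`-th `h`-construction principle for groups.
For no free group `F` is the quotient of the free product `N ∗ F` by the normal closure
of `{ b_{ℓ,m} : ℓ < n, m < ω }` a free group; equivalently `N ∗ F` has no free basis
extending `{ b_{ℓ,m} : ℓ < n, m < ω }`. -/
theorem no_free_quotient_of_coprod (n : ℕ) (hn : 1 ≤ n) (ι : Type) :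
    ¬ IsFreeGroup
        ((Monoid.Coprod (FreeGroup (Gen n)) (FreeGroup ι)) ⧸
          Subgroup.normalClosure
            {x | ∃ (ℓ : Fin n) (m : ℕ), x = Monoid.Coprod.inl (b n ℓ m)}) ∧
    ¬ ∃ X : Set (Monoid.Coprod (FreeGroup (Gen n)) (FreeGroup ι)),
        {x | ∃ (ℓ : Fin n) (m : ℕ), x = Monoid.Coprod.inl (b n ℓ m)} ⊆ X ∧
        IsFreeBasis (Monoid.Coprod (FreeGroup (Gen n)) (FreeGroup ι)) X := by
  have hQ := not_isFreeGroup_quotient (ι := ι) hn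
  exact ⟨hQ, fun ⟨_, hSX, hX⟩ => hQ (hX.isFreeGroup_quotient_normalClosure hSX)⟩

end Sh521
end

section
/- Let n ≥ 1 and let G be the abelian group freely generated by { y_m : m < ω } ∪ { x_{ℓ,m} : ℓ < n, m < ω } subject to 2·y_{m+1} = y_m + Σ_{ℓ<n} x_{ℓ,m}. Then for each ℓ* < n and m* < ω, the group G is free abelian with basis { y_m : m ≥ m* } ∪ { x_{ℓ,m} : ℓ < n, m < ω, ¬(ℓ = ℓ* ∧ m ≥ m*) } — i.e. one may omit the generators x_{ℓ*,m} for m ≥ m* (they are expressible from the rest via the relations) and the remaining generators are free. -/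
namespace Sh521

/-- Generators: `x_{ℓ,m}` (via `Sum.inl`) and `y_m` (via `Sum.inr`). -/
abbrev Gen2 (n : ℕ) := (Fin n × ℕ) ⊕ ℕ

/-- The relations `2·y_{m+1} = y_m + Σ_{ℓ<n} x_{ℓ,m}` (for `m < ω`). -/
def rels2 (n : ℕ) : Set (Gen2 n →₀ ℤ) :=
  {r | ∃ m : ℕ,
    r = Finsupp.single (Sum.inr (m + 1)) (2 : ℤ)
        - Finsupp.single (Sum.inr m) (1 : ℤ)
        - ∑ ℓ : Fin n, Finsupp.single (Sum.inl (ℓ, m)) (1 : ℤ)}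

/-- The abelian group freely generated by `{y_m} ∪ {x_{ℓ,m}}` subject to
`2·y_{m+1} = y_m + Σ_{ℓ<n} x_{ℓ,m}`. -/
abbrev Pres2 (n : ℕ) : Type := (Gen2 n →₀ ℤ) ⧸ Submodule.span ℤ (rels2 n)

/-- The image of the generator `x_{ℓ,m}`. -/
noncomputable def xg (n : ℕ) (ℓ : Fin n) (m : ℕ) : Pres2 n :=
  Submodule.Quotient.mk (Finsupp.single (Sum.inl (ℓ, m)) (1 : ℤ))

/-- The image of the generator `y_m`. -/
noncomputable def yg (n : ℕ) (m : ℕ) : Pres2 n :=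
  Submodule.Quotient.mk (Finsupp.single (Sum.inr m) (1 : ℤ))

end Sh521

/-!
Each omitted generator is solved for from one relation: `y_m = 2 y_{m+1} - Σ_ℓ x_{ℓ,m}` for
`m < mstar` (by downward recursion on `m`; all `x_{ℓ,m}` with `m < mstar` are kept), and
`x_{lstar,m} = 2 y_{m+1} - y_m - Σ_{ℓ ≠ lstar} x_{ℓ,m}` for `m ≥ mstar`. These coordinates
kill every relation, so they define a map from `Pres2 n` to the free abelian group on the kept
generators, which is inverse to the evaluation map back.
-/

namespace Sh521

section QuotientBasis

variable {R ι : Type*} [Ring R]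

theorem exists_basis_quotient_of_coords (N : Submodule R (ι →₀ R)) (p : ι → Prop)
    (e : ι → ({i // p i} →₀ R))
    (e_retained : ∀ i : {i // p i}, e i = Finsupp.single i 1)
    (e_rels : N ≤ LinearMap.ker (Finsupp.linearCombination R e))
    (e_gen : ∀ i, Finsupp.linearCombination R
      (fun j : {i // p i} => Submodule.Quotient.mk (p := N) (Finsupp.single j.1 1)) (e i) =
        Submodule.Quotient.mk (Finsupp.single i 1)) :
    ∃ v : Module.Basis {i // p i} R ((ι →₀ R) ⧸ N),
      ∀ i, v i = Submodule.Quotient.mk (Finsupp.single i.1 1) := by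
  set toQuot := Finsupp.linearCombination R
    (fun j : {i // p i} => Submodule.Quotient.mk (p := N) (Finsupp.single j.1 (1 : R)))
  set coords := N.liftQ (Finsupp.linearCombination R e) e_rels
  have coords_mk (i : ι) (c : R) :
      coords (Submodule.Quotient.mk (Finsupp.single i c)) = c • e i := by
    simp [coords]
  have left_inv : coords ∘ₗ toQuot = LinearMap.id := by
    refine Finsupp.lhom_ext fun j c => ?_
    simp [toQuot, ← Submodule.Quotient.mk_smul, coords_mk, e_retained]
  have right_inv : toQuot ∘ₗ coords = LinearMap.id := by
    refine Submodule.linearMap_qext _ (Finsupp.lhom_ext fun i c => ?_)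
    simp [coords_mk, e_gen, ← Submodule.Quotient.mk_smul]
  refine ⟨.ofRepr (.ofLinearMap coords toQuot left_inv right_inv), fun j => ?_⟩
  simp [toQuot]

end QuotientBasis

section Coordinates

variable {n : ℕ} (lstar : Fin n) (mstar : ℕ)

abbrev Retained (g : Gen2 n) : Prop :=
  (∃ m : ℕ, g = Sum.inr m ∧ mstar ≤ m) ∨
    (∃ (ℓ : Fin n) (m : ℕ), g = Sum.inl (ℓ, m) ∧ ¬(ℓ = lstar ∧ mstar ≤ m))

@[simp]
theorem retained_inr_iff (m : ℕ) : Retained lstar mstar (Sum.inr m : Gen2 n) ↔ mstar ≤ m := by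
  simp [Retained]

@[simp]
theorem retained_inl_iff (ℓ : Fin n) (m : ℕ) :
    Retained lstar mstar (Sum.inl (ℓ, m)) ↔ ¬(ℓ = lstar ∧ mstar ≤ m) := by
  simp [Retained]

open Classical in
noncomputable def retainedSingle (g : Gen2 n) : {g // Retained lstar mstar g} →₀ ℤ :=
  if h : Retained lstar mstar g then Finsupp.single ⟨g, h⟩ 1 else 0

theorem retainedSingle_of_not_retained {g : Gen2 n} (hg : ¬Retained lstar mstar g) :
    retainedSingle lstar mstar g = 0 :=
  dif_neg hg

noncomputable def yCoord (m : ℕ) : {g // Retained lstar mstar g} →₀ ℤ :=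
  if m < mstar then
    (2 : ℤ) • yCoord (m + 1) - ∑ ℓ : Fin n, retainedSingle lstar mstar (Sum.inl (ℓ, m))
  else retainedSingle lstar mstar (Sum.inr m)
termination_by mstar - m

theorem yCoord_of_lt {m : ℕ} (hm : m < mstar) :
    yCoord lstar mstar m =
      (2 : ℤ) • yCoord lstar mstar (m + 1) -
        ∑ ℓ : Fin n, retainedSingle lstar mstar (Sum.inl (ℓ, m)) := by
  rw [yCoord, if_pos hm]

theorem yCoord_of_le {m : ℕ} (hm : mstar ≤ m) :
    yCoord lstar mstar m = retainedSingle lstar mstar (Sum.inr m) := by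
  rw [yCoord, if_neg hm.not_gt]

noncomputable def coord : Gen2 n → {g // Retained lstar mstar g} →₀ ℤ
  | Sum.inr m => yCoord lstar mstar m
  | Sum.inl (ℓ, m) =>
    if ℓ = lstar ∧ mstar ≤ m then
      (2 : ℤ) • yCoord lstar mstar (m + 1) - yCoord lstar mstar m -
        ∑ ℓ' : Fin n, retainedSingle lstar mstar (Sum.inl (ℓ', m))
    else retainedSingle lstar mstar (Sum.inl (ℓ, m))

theorem coord_retained (g : {g // Retained lstar mstar g}) :
    coord lstar mstar g.1 = Finsupp.single g 1 := by
  obtain ⟨g, hg⟩ := g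
  rcases hg with ⟨m, rfl, hm⟩ | ⟨ℓ, m, rfl, hx⟩
  · rw [coord, yCoord_of_le _ _ hm, retainedSingle, dif_pos]
  · rw [coord, if_neg hx, retainedSingle, dif_pos]

theorem two_smul_yg_succ (m : ℕ) :
    (2 : ℤ) • yg n (m + 1) = yg n m + ∑ ℓ : Fin n, xg n ℓ m := by
  simp only [yg, xg, ← Submodule.mkQ_apply, ← map_smul, ← map_sum, ← map_add]
  rw [Submodule.mkQ_apply, Submodule.mkQ_apply, Submodule.Quotient.eq]
  refine Submodule.subset_span ⟨m, ?_⟩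
  rw [Finsupp.smul_single, smul_eq_mul, mul_one]
  abel

theorem two_smul_yCoord_succ_sub (m : ℕ) :
    (2 : ℤ) • yCoord lstar mstar (m + 1) - yCoord lstar mstar m =
      ∑ ℓ : Fin n, coord lstar mstar (Sum.inl (ℓ, m)) := by
  by_cases hm : m < mstar
  · have hx (ℓ : Fin n) :
        coord lstar mstar (Sum.inl (ℓ, m)) = retainedSingle lstar mstar (Sum.inl (ℓ, m)) := by
      rw [coord, if_neg (by omega)]
    rw [yCoord_of_lt _ _ hm, Finset.sum_congr rfl fun ℓ _ => hx ℓ]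
    abel
  · replace hm : mstar ≤ m := not_lt.mp hm
    have hothers : ∀ ℓ ∈ Finset.univ.erase lstar,
        coord lstar mstar (Sum.inl (ℓ, m)) = retainedSingle lstar mstar (Sum.inl (ℓ, m)) :=
      fun ℓ hℓ => by rw [coord, if_neg fun h => Finset.ne_of_mem_erase hℓ h.1]
    have hstar : retainedSingle lstar mstar (Sum.inl (lstar, m)) = 0 :=
      retainedSingle_of_not_retained _ _ (by simp [hm])
    rw [← Finset.add_sum_erase _ _ (Finset.mem_univ lstar), Finset.sum_congr rfl hothers, coord,
      if_pos ⟨rfl, hm⟩, ← Finset.add_sum_erase _ _ (Finset.mem_univ lstar), hstar]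
    abel

noncomputable def evalRetained : ({g // Retained lstar mstar g} →₀ ℤ) →ₗ[ℤ] Pres2 n :=
  Finsupp.linearCombination ℤ fun j => Submodule.Quotient.mk (Finsupp.single j.1 1)

theorem evalRetained_retainedSingle {g : Gen2 n} (hg : Retained lstar mstar g) :
    evalRetained lstar mstar (retainedSingle lstar mstar g) =
      Submodule.Quotient.mk (Finsupp.single g 1) := by
  simp [retainedSingle, hg, evalRetained]

theorem evalRetained_yCoord (m : ℕ) :
    evalRetained lstar mstar (yCoord lstar mstar m) = yg n m := by
  by_cases hm : m < mstar
  · rw [yCoord_of_lt _ _ hm, map_sub, map_smul, evalRetained_yCoord (m + 1), map_sum,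
      two_smul_yg_succ]
    simp [evalRetained_retainedSingle, hm, xg]
  · rw [yCoord_of_le _ _ (not_lt.mp hm), evalRetained_retainedSingle _ _ (by simpa using hm)]
    rfl
termination_by mstar - m

theorem evalRetained_coord (g : Gen2 n) :
    evalRetained lstar mstar (coord lstar mstar g) =
      Submodule.Quotient.mk (Finsupp.single g 1) := by
  rcases g with ⟨ℓ, m⟩ | m
  · rw [coord]
    split_ifs with h
    · obtain ⟨rfl, hm⟩ := h
      have hothers :
          ∑ ℓ' : Fin n, evalRetained ℓ mstar (retainedSingle ℓ mstar (Sum.inl (ℓ', m))) =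
            ∑ ℓ' ∈ Finset.univ.erase ℓ, xg n ℓ' m := by
        rw [← Finset.add_sum_erase _ _ (Finset.mem_univ ℓ),
          retainedSingle_of_not_retained _ _ (by simp [hm]), map_zero, zero_add]
        exact Finset.sum_congr rfl fun ℓ' hℓ' =>
          evalRetained_retainedSingle _ _ (by simp [Finset.ne_of_mem_erase hℓ'])
      rw [map_sub, map_sub, map_smul, map_sum, evalRetained_yCoord, evalRetained_yCoord, hothers,
        two_smul_yg_succ, ← Finset.add_sum_erase _ _ (Finset.mem_univ ℓ)]
      simp only [xg]
      abel
    · exact evalRetained_retainedSingle _ _ (by simpa using h)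
  · exact evalRetained_yCoord lstar mstar m

end Coordinates

theorem pres2_free_basis_omitting_column_general (n : ℕ)
    (lstar : Fin n) (mstar : ℕ) :
    ∃ v : Module.Basis
        {g : Gen2 n // (∃ m : ℕ, g = Sum.inr m ∧ mstar ≤ m) ∨
          (∃ (ℓ : Fin n) (m : ℕ), g = Sum.inl (ℓ, m) ∧ ¬(ℓ = lstar ∧ mstar ≤ m))}
        ℤ (Pres2 n),
      ∀ g, v g = Submodule.Quotient.mk (Finsupp.single g.1 (1 : ℤ)) := by
  refine exists_basis_quotient_of_coords _ (Retained lstar mstar) (coord lstar mstar)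
    (coord_retained lstar mstar) ?_ (evalRetained_coord lstar mstar)
  rw [Submodule.span_le]
  rintro _ ⟨m, rfl⟩
  simp only [SetLike.mem_coe, LinearMap.mem_ker, map_sub, map_sum,
    Finsupp.linearCombination_single, one_smul]
  exact sub_eq_zero.mpr (two_smul_yCoord_succ_sub lstar mstar m)

/-- For each `ℓ* < n` and `m* < ω`, the group `Pres2 n` is free abelian
with basis `{ y_m : m ≥ m* } ∪ { x_{ℓ,m} : ¬(ℓ = ℓ* ∧ m ≥ m*) }`: the generators
`x_{ℓ*,m}` for `m ≥ m*` (and the `y_m` for `m < m*`) are expressible from the rest via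
the relations, and the remaining generators are free. -/
theorem pres2_free_basis_omitting_column (n : ℕ) (hn : 1 ≤ n)
    (lstar : Fin n) (mstar : ℕ) :
    ∃ v : Module.Basis
        {g : Gen2 n // (∃ m : ℕ, g = Sum.inr m ∧ mstar ≤ m) ∨
          (∃ (ℓ : Fin n) (m : ℕ), g = Sum.inl (ℓ, m) ∧ ¬(ℓ = lstar ∧ mstar ≤ m))}
        ℤ (Pres2 n),
      ∀ g, v g = Submodule.Quotient.mk (Finsupp.single g.1 (1 : ℤ)) :=
  pres2_free_basis_omitting_column_general n lstar mstar

end Sh521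
end
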